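/- arXiv:1305.1453 — 10 statements merged into one kernel-verified Lean document; each statement's English description precedes it below -/
import Mathlib

section
/- Let X be a nonempty complete p-uniformly convex metric space with parameter k > 0 and let S be a nonempty bounded subset of X. Then rad(S) ≤ (1 + 2^(p−3)·k/(2^(p−1) − 1))^(−1/p) · diam(S). -/
open Filter Topology

noncomputable def jungC (p k : ℝ) (n : ℕ) : ℝ :=
  k / 4 * (1 / 2) ^ n * ∑ j ∈ Finset.range n, ((2 : ℝ) ^ (1 - p)) ^ j

lemma jungT_rpow (p : ℝ) (n : ℕ) :
    ((1 / 2 : ℝ) ^ n) ^ p = (1 / 2 : ℝ) ^ n * ((2 : ℝ) ^ (1 - p)) ^ n := by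
  have h2 : (0 : ℝ) < 2 := two_pos
  have hhalf : ((1 / 2 : ℝ) ^ n) = (2 : ℝ) ^ (-(n : ℝ)) := by
    rw [Real.rpow_neg h2.le, Real.rpow_natCast]
    simp [one_div, inv_pow]
  rw [hhalf, ← Real.rpow_natCast ((2 : ℝ) ^ (1 - p)) n, ← Real.rpow_mul h2.le,
    ← Real.rpow_mul h2.le, ← Real.rpow_add h2]
  congr 1
  ring

lemma jungC_succ (p k : ℝ) (n : ℕ) :
    jungC p k (n + 1) = jungC p k n / 2 + k / 8 * ((1 / 2 : ℝ) ^ n) ^ p := by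
  unfold jungC
  rw [Finset.sum_range_succ, jungT_rpow]
  ring

lemma jungC_nonneg (p : ℝ) {k : ℝ} (hk : 0 ≤ k) (n : ℕ) : 0 ≤ jungC p k n := by
  unfold jungC
  have : (0:ℝ) ≤ ∑ j ∈ Finset.range n, ((2 : ℝ) ^ (1 - p)) ^ j :=
    Finset.sum_nonneg fun j _ => pow_nonneg (Real.rpow_nonneg (by norm_num) _) _
  positivity

/-- **Jung's theorem for `p`-uniformly convex spaces.**
Let `X` be a nonempty complete `p`-uniformly convex metric space with parameter `k > 0`
and let `S` be a nonempty bounded subset of `X`.  Then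
`rad S ≤ (1 + 2^(p-3) * k / (2^(p-1) - 1))^(-1/p) * diam S`, where
`rad S = ⨅ x, ⨆ y ∈ S, dist x y`. -/
theorem jung_p_uniformly_convex
    {X : Type*} [MetricSpace X] [Nonempty X] [CompleteSpace X]
    (p k : ℝ) (hp : 1 ≤ p) (hk : 0 < k)
    (geo : ∀ x y : X, ∃ m : X, dist x m = dist x y / 2 ∧ dist m y = dist x y / 2)
    (puc : ∀ x y z m : X,
      dist x m = dist x y / 2 → dist m y = dist x y / 2 →
      dist z m ^ p ≤ (1 / 2) * dist z x ^ p + (1 / 2) * dist z y ^ p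
        - (k / 8) * dist x y ^ p)
    (S : Set X) (hS : S.Nonempty) (hSb : Bornology.IsBounded S) :
    (⨅ x : X, ⨆ y : S, dist x (y : X))
      ≤ (1 + 2 ^ (p - 3) * k / (2 ^ (p - 1) - 1)) ^ (-(1 / p)) * Metric.diam S := by
  classical
  obtain ⟨s₀, hs₀⟩ := hS
  haveI hne : Nonempty S := ⟨⟨s₀, hs₀⟩⟩
  have hp0 : (0 : ℝ) < p := lt_of_lt_of_le one_pos hp
  have hp0' : (0 : ℝ) ≤ p := hp0.le
  set D := Metric.diam S with hDdef
  have hD0 : (0 : ℝ) ≤ D := Metric.diam_nonneg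
  have hbdd : ∀ x : X, BddAbove (Set.range fun y : S => dist x (y : X)) := by
    intro x
    obtain ⟨R, hR⟩ := hSb.subset_closedBall x
    refine ⟨R, ?_⟩
    rintro _ ⟨y, rfl⟩
    have := hR y.2
    rw [Metric.mem_closedBall] at this
    rw [dist_comm] at this
    exact this
  have hsup_le_D : ∀ x ∈ S, (⨆ y : S, dist x (y : X)) ≤ D :=
    fun x hx => ciSup_le fun y => Metric.dist_le_diam_of_mem hSb hx y.2
  set r := ⨅ x : X, ⨆ y : S, dist x (y : X) with hrdef
  have hfx0 : ∀ x : X, (0 : ℝ) ≤ ⨆ y : S, dist x (y : X) :=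
    fun x => le_trans dist_nonneg (le_ciSup (hbdd x) ⟨s₀, hs₀⟩)
  have hr0 : 0 ≤ r := le_ciInf hfx0
  have hrf : ∀ x : X, r ≤ ⨆ y : S, dist x (y : X) := fun x =>
    ciInf_le ⟨0, by rintro _ ⟨x, rfl⟩; exact hfx0 x⟩ x
  have hrD : r ≤ D := le_trans (hrf s₀) (hsup_le_D s₀ hs₀)
  rcases eq_or_lt_of_le hp with rfl | hp1
  · -- p = 1
    have h1 : (1 : ℝ) + 2 ^ ((1:ℝ) - 3) * k / (2 ^ ((1:ℝ) - 1) - 1) = 1 := by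
      norm_num
    rw [h1, Real.one_rpow, one_mul]
    exact hrD
  · -- p > 1
    set q := (2 : ℝ) ^ (1 - p) with hqdef
    have hq0 : 0 ≤ q := Real.rpow_nonneg (by norm_num) _
    have hq1 : q < 1 := Real.rpow_lt_one_of_one_lt_of_neg one_lt_two (by linarith)
    -- key geometric lemma
    have key : ∀ n : ℕ, ∀ x y : X, ∃ m : X,
        dist x m = (1/2 : ℝ) ^ (n+1) * dist x y ∧
        dist m y = (1 - (1/2 : ℝ) ^ (n+1)) * dist x y ∧
        ∀ z : X, dist z m ^ p ≤ (1 - (1/2 : ℝ) ^ (n+1)) * dist z x ^ p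
            + (1/2 : ℝ) ^ (n+1) * dist z y ^ p - jungC p k (n+1) * dist x y ^ p := by
      intro n
      induction n with
      | zero =>
        intro x y
        obtain ⟨m, h1, h2⟩ := geo x y
        have hC1 : jungC p k (0+1) = k / 8 := by
          simp [jungC]
          ring
        refine ⟨m, by rw [h1]; ring, by rw [h2]; ring, fun z => ?_⟩
        have h := puc x y z m h1 h2
        rw [hC1]
        norm_num
        linarith [h]
      | succ n ih =>
        intro x y
        obtain ⟨m, h1, h2, h3⟩ := ih x y
        obtain ⟨m', g1, g2⟩ := geo x m
        have hxm' : dist x m' = (1/2 : ℝ) ^ (n+1+1) * dist x y := by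
          rw [g1, h1, pow_succ]; ring
        have hmm' : dist m' m = (1/2 : ℝ) ^ (n+1+1) * dist x y := by
          rw [g2, h1, pow_succ]; ring
        have hm'y : dist m' y = (1 - (1/2 : ℝ) ^ (n+1+1)) * dist x y := by
          have t1 := dist_triangle m' m y
          have t2 := dist_triangle x m' y
          rw [pow_succ] at hxm' hmm' ⊢
          linarith
        refine ⟨m', hxm', hm'y, fun z => ?_⟩
        have hz := puc x m z m' g1 g2
        have hxmp : dist x m ^ p = ((1/2 : ℝ) ^ (n+1)) ^ p * dist x y ^ p := by
          rw [h1, Real.mul_rpow (by positivity) dist_nonneg]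
        rw [hxmp] at hz
        have h3z := h3 z
        have hCs : jungC p k (n+1+1)
            = jungC p k (n+1) / 2 + k / 8 * ((1/2 : ℝ) ^ (n+1)) ^ p := jungC_succ p k (n+1)
        rw [hCs, pow_succ]
        nlinarith [h3z, hz]
    -- main inequality for each n
    have step : ∀ n : ℕ,
        (1 + k / 4 * ∑ j ∈ Finset.range (n+1), q ^ j) * r ^ p ≤ D ^ p := by
      intro n
      set T := (1/2 : ℝ) ^ (n+1) with hT
      have hT0 : (0:ℝ) < T := by positivity
      have hT1 : T ≤ 1 := by
        rw [hT]; exact pow_le_one₀ (by norm_num) (by norm_num)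
      set C := jungC p k (n+1) with hC
      have hC0 : 0 ≤ C := jungC_nonneg p hk.le (n+1)
      have hstep0 : ∀ ε : ℝ, 0 < ε →
          r ^ p ≤ (1 - T) * (r + ε) ^ p + T * D ^ p - C * (max (r - ε) 0) ^ p := by
        intro ε hε
        have hlt : (⨅ x : X, ⨆ y : S, dist x (y : X)) < r + ε := by
          rw [← hrdef]; linarith
        obtain ⟨x, hx⟩ := exists_lt_of_ciInf_lt hlt
        have hlt2 : (⨆ y : S, dist x (y : X)) - ε < ⨆ y : S, dist x (y : X) := by linarith
        obtain ⟨y, hy⟩ := exists_lt_of_lt_ciSup hlt2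
        obtain ⟨m, hm1, hm2, hm3⟩ := key n x y
        have hxyb : max (r - ε) 0 ≤ dist x (y : X) := by
          apply max_le _ dist_nonneg
          have := hrf x; linarith
        set M := (1 - T) * (r + ε) ^ p + T * D ^ p - C * (max (r - ε) 0) ^ p with hM
        have hzM : ∀ z : S, dist (z : X) m ^ p ≤ M := by
          intro z
          have b1 : dist (z : X) x ≤ r + ε := by
            have h := le_ciSup (hbdd x) z
            rw [dist_comm]; linarith
          have b1p : dist (z : X) x ^ p ≤ (r + ε) ^ p :=
            Real.rpow_le_rpow dist_nonneg b1 hp0'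
          have b2p : dist (z : X) (y : X) ^ p ≤ D ^ p :=
            Real.rpow_le_rpow dist_nonneg (Metric.dist_le_diam_of_mem hSb z.2 y.2) hp0'
          have b3p : (max (r - ε) 0) ^ p ≤ dist x (y : X) ^ p :=
            Real.rpow_le_rpow (le_max_right _ _) hxyb hp0'
          have hmz := hm3 (z : X)
          have c1 : (1 - T) * dist (z : X) x ^ p ≤ (1 - T) * (r + ε) ^ p :=
            mul_le_mul_of_nonneg_left b1p (by linarith)
          have c2 : T * dist (z : X) (y : X) ^ p ≤ T * D ^ p :=
            mul_le_mul_of_nonneg_left b2p hT0.le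
          have c3 : C * (max (r - ε) 0) ^ p ≤ C * dist x (y : X) ^ p :=
            mul_le_mul_of_nonneg_left b3p hC0
          rw [hM]; linarith
        have hM0 : 0 ≤ M := le_trans (Real.rpow_nonneg dist_nonneg p) (hzM ⟨s₀, hs₀⟩)
        have hfm : (⨆ z : S, dist m (z : X)) ≤ M ^ (1/p) := by
          apply ciSup_le
          intro z
          have hdd : dist m (z : X) = dist (z : X) m := dist_comm _ _
          have hrr : dist (z : X) m = (dist (z : X) m ^ p) ^ (1/p) := by
            rw [one_div, Real.rpow_rpow_inv dist_nonneg (ne_of_gt hp0)]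
          rw [hdd, hrr]
          exact Real.rpow_le_rpow (Real.rpow_nonneg dist_nonneg _) (hzM z)
            (one_div_nonneg.mpr hp0')
        have hrM : r ≤ M ^ (1/p) := le_trans (hrf m) hfm
        have hfin : r ^ p ≤ (M ^ (1/p)) ^ p := Real.rpow_le_rpow hr0 hrM hp0'
        rwa [one_div, Real.rpow_inv_rpow hM0 (ne_of_gt hp0)] at hfin
      have hcont : Tendsto (fun ε : ℝ => (1 - T) * (r + ε) ^ p + T * D ^ p
          - C * (max (r - ε) 0) ^ p) (𝓝[>] 0)
          (𝓝 ((1 - T) * r ^ p + T * D ^ p - C * r ^ p)) := by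
        have c1 : Continuous fun ε : ℝ => (1 - T) * (r + ε) ^ p + T * D ^ p
            - C * (max (r - ε) 0) ^ p := by
          refine Continuous.sub (Continuous.add ?_ continuous_const) ?_
          · exact continuous_const.mul ((Real.continuous_rpow_const hp0').comp
              (continuous_const.add continuous_id))
          · exact continuous_const.mul ((Real.continuous_rpow_const hp0').comp
              ((continuous_const.sub continuous_id).max continuous_const))
        have h := (c1.tendsto 0).mono_left (nhdsWithin_le_nhds (s := Set.Ioi (0:ℝ)))
        simpa [max_eq_left hr0] using h
      have hlim : r ^ p ≤ (1 - T) * r ^ p + T * D ^ p - C * r ^ p :=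
        ge_of_tendsto hcont (eventually_nhdsWithin_of_forall fun ε hε => hstep0 ε hε)
      have hfin1 : T * r ^ p + C * r ^ p ≤ T * D ^ p := by linarith
      have hCT : C = k / 4 * T * ∑ j ∈ Finset.range (n+1), q ^ j := rfl
      refine le_of_mul_le_mul_left ?_ hT0
      calc T * ((1 + k / 4 * ∑ j ∈ Finset.range (n+1), q ^ j) * r ^ p)
          = T * r ^ p + C * r ^ p := by rw [hCT]; ring
        _ ≤ T * D ^ p := hfin1
    -- n → ∞
    have hgeom : Tendsto (fun n : ℕ => (1 + k / 4 * ∑ j ∈ Finset.range (n+1), q ^ j) * r ^ p)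
        atTop (𝓝 ((1 + k / 4 * (1 - q)⁻¹) * r ^ p)) := by
      have h := (hasSum_geometric_of_lt_one hq0 hq1).tendsto_sum_nat
      have h2 := h.comp (tendsto_add_atTop_nat 1)
      exact ((h2.const_mul (k / 4)).const_add 1).mul_const _
    have hmain : (1 + k / 4 * (1 - q)⁻¹) * r ^ p ≤ D ^ p :=
      le_of_tendsto hgeom (Filter.Eventually.of_forall step)
    -- identify the constant
    have hw1 : 1 < (2 : ℝ) ^ (p - 1) := by
      rw [show (1:ℝ) = (2:ℝ) ^ (0:ℝ) by simp]
      exact Real.rpow_lt_rpow_of_exponent_lt one_lt_two (by linarith)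
    have hw : (2 : ℝ) ^ (p - 1) = 4 * (2 : ℝ) ^ (p - 3) := by
      rw [show p - 1 = (p - 3) + 2 by ring, Real.rpow_add two_pos]
      rw [show (2:ℝ) ^ (2:ℝ) = 4 by
        rw [show (2:ℝ) = ((2:ℕ):ℝ) by norm_num, Real.rpow_natCast]; norm_num]
      ring
    have hq_inv : q = ((2 : ℝ) ^ (p - 1))⁻¹ := by
      rw [hqdef, show (1 - p) = -(p - 1) by ring, Real.rpow_neg (by norm_num)]
    have hconst : 1 + 2 ^ (p - 3) * k / (2 ^ (p - 1) - 1) = 1 + k / 4 * (1 - q)⁻¹ := by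
      have h4 : (0:ℝ) < (2 : ℝ) ^ (p - 3) := Real.rpow_pos_of_pos two_pos _
      have hne : (2:ℝ) ^ (p - 1) - 1 ≠ 0 := by linarith
      have hne2 : (2:ℝ) ^ (p - 1) ≠ 0 := by linarith
      rw [hq_inv]
      rw [hw] at hne hne2 ⊢
      field_simp
    rw [hconst]
    have hq1' : (0:ℝ) < 1 - q := by linarith
    have hA1 : (1:ℝ) < 1 + k / 4 * (1 - q)⁻¹ := by
      have hpos : 0 < k / 4 * (1 - q)⁻¹ := by positivity
      linarith
    set A := 1 + k / 4 * (1 - q)⁻¹ with hA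
    have hApos : (0:ℝ) < A := lt_trans one_pos hA1
    have hmul : (A ^ (-(1/p)) * D) ^ p = A⁻¹ * D ^ p := by
      rw [Real.mul_rpow (Real.rpow_nonneg hApos.le _) hD0, ← Real.rpow_mul hApos.le,
        show -(1/p) * p = -1 by field_simp, Real.rpow_neg_one]
    have hfin : r ^ p ≤ (A ^ (-(1/p)) * D) ^ p := by
      rw [hmul]
      calc r ^ p = A⁻¹ * (A * r ^ p) := by field_simp
        _ ≤ A⁻¹ * D ^ p := mul_le_mul_of_nonneg_left hmain (inv_nonneg.mpr hApos.le)
    exact (Real.rpow_le_rpow_iff hr0 (by positivity) hp0).mp hfin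
end

section
/- Let X be a nonempty complete p-uniformly convex metric space with parameter k > 0 and let S be a nonempty bounded subset of X. Then there exists a unique point z ∈ X (the circumcenter of S) such that sup_{y ∈ S} d(z,y) = rad(S); in particular S is contained in the unique closed circumball B(z, rad(S)). -/
/-!
Write `r(x) = sup_{y ∈ S} d(x, y)`, a `1`-Lipschitz function. Applying `p`-uniform convexity at a
midpoint `m` of `x, y` to every point of `S` and using `rad S ≤ r(m)` gives
`(k/8) d(x,y)^p ≤ (r(x)^p + r(y)^p)/2 - (rad S)^p`. Hence any sequence with `r(u n) → rad S` is
Cauchy, its limit attains the radius by continuity, and two points attaining it are at distance `0`.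
-/

open Filter Topology Set

section UniformMinimizer

variable {X : Type*}

theorem cauchySeq_of_dist_rpow_le [PseudoMetricSpace X] {u : ℕ → X} {g : ℕ → ℝ} {M c p : ℝ}
    (hc : 0 < c) (hp : 0 < p) (hg : Tendsto g atTop (𝓝 M))
    (h : ∀ m n, c * dist (u m) (u n) ^ p ≤ (g m + g n) / 2 - M) : CauchySeq u := by
  rw [cauchySeq_iff_tendsto_dist_atTop_0]
  have hgap : Tendsto (fun n : ℕ × ℕ => ((g n.1 + g n.2) / 2 - M) / c) atTop (𝓝 0) := by
    rw [← prod_atTop_atTop_eq]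
    simpa using
      ((((hg.comp tendsto_fst).add (hg.comp tendsto_snd)).div_const 2).sub_const M).div_const c
  refine squeeze_zero (fun _ => dist_nonneg) (fun n => ?_)
    (hgap.rpow_const_nhds_zero (inv_pos.2 hp))
  have hd := h n.1 n.2
  have hdp : 0 ≤ dist (u n.1) (u n.2) ^ p := by positivity
  have hgap_nonneg : 0 ≤ (g n.1 + g n.2) / 2 - M := (mul_nonneg hc.le hdp).trans hd
  rw [Real.le_rpow_inv_iff_of_pos dist_nonneg (div_nonneg hgap_nonneg hc.le) hp, le_div_iff₀' hc]
  exact hd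

theorem existsUnique_eq_of_tendsto_of_dist_rpow_le [MetricSpace X] [CompleteSpace X]
    {f : X → ℝ} (hf : Continuous f) {u : ℕ → X} {M c p : ℝ} (hc : 0 < c) (hp : 0 < p)
    (hu : Tendsto (f ∘ u) atTop (𝓝 M)) (h : ∀ x y, c * dist x y ^ p ≤ (f x + f y) / 2 - M) :
    ∃! z, f z = M := by
  obtain ⟨z, hz⟩ := cauchySeq_tendsto_of_complete <|
    cauchySeq_of_dist_rpow_le hc hp hu fun m n => h (u m) (u n)
  have hfz : f z = M := tendsto_nhds_unique ((hf.tendsto z).comp hz) hu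
  refine ⟨z, hfz, fun w hfw => ?_⟩
  by_contra hwz
  have hd := h w z
  have := Real.rpow_pos_of_pos (dist_pos.2 hwz) p
  rw [hfw, hfz] at hd
  nlinarith

end UniformMinimizer

section Circumradius

variable {X : Type*} [PseudoMetricSpace X] {S : Set X}

noncomputable def supDist (S : Set X) (x : X) : ℝ := ⨆ y : S, dist x (y : X)

noncomputable def circumradius (S : Set X) : ℝ := ⨅ x : X, supDist S x

theorem supDist_nonneg (x : X) : 0 ≤ supDist S x := Real.iSup_nonneg fun _ => dist_nonneg

theorem dist_le_supDist (hS : Bornology.IsBounded S) (x : X) {y : X} (hy : y ∈ S) :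
    dist x y ≤ supDist S x := by
  refine le_ciSup (f := fun y : S => dist x (y : X)) ?_ ⟨y, hy⟩
  obtain ⟨R, hR⟩ := (Metric.isBounded_iff_subset_closedBall x).1 hS
  exact ⟨R, forall_mem_range.2 fun z => dist_comm x z ▸ hR z.2⟩

theorem subset_closedBall_supDist (hS : Bornology.IsBounded S) (x : X) :
    S ⊆ Metric.closedBall x (supDist S x) := fun _ hy =>
  Metric.mem_closedBall'.2 (dist_le_supDist hS x hy)

theorem supDist_rpow_le {p A : ℝ} (hp : 0 < p) (hne : S.Nonempty) {x : X}
    (h : ∀ y ∈ S, dist x y ^ p ≤ A) : supDist S x ^ p ≤ A := by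
  have := hne.to_subtype
  have hA : 0 ≤ A := (Real.rpow_nonneg dist_nonneg p).trans (h _ hne.some_mem)
  rw [← Real.le_rpow_inv_iff_of_pos (supDist_nonneg x) hA hp]
  exact ciSup_le fun y => (Real.le_rpow_inv_iff_of_pos dist_nonneg hA hp).2 (h y y.2)

theorem lipschitzWith_supDist (hS : Bornology.IsBounded S) : LipschitzWith 1 (supDist S) :=
  LipschitzWith.of_le_add fun x x' =>
    Real.iSup_le (fun y => by linarith [dist_triangle x x' y, dist_le_supDist hS x' y.2])
      (add_nonneg (supDist_nonneg x') dist_nonneg)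

theorem circumradius_nonneg : 0 ≤ circumradius S := Real.iInf_nonneg fun _ => supDist_nonneg _

theorem circumradius_le_supDist (x : X) : circumradius S ≤ supDist S x :=
  ciInf_le ⟨0, forall_mem_range.2 supDist_nonneg⟩ x

theorem exists_seq_tendsto_circumradius [Nonempty X] (S : Set X) :
    ∃ u : ℕ → X, Tendsto (fun n => supDist S (u n)) atTop (𝓝 (circumradius S)) := by
  obtain ⟨v, -, hv, hv_mem⟩ :=
    exists_seq_tendsto_sInf (range_nonempty (supDist S)) ⟨0, forall_mem_range.2 supDist_nonneg⟩
  choose u hu using hv_mem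
  exact ⟨u, by rwa [show (fun n => supDist S (u n)) = v from funext hu]⟩

theorem circumradius_rpow_add_le {p k : ℝ} (hp : 0 < p) (hS : Bornology.IsBounded S)
    (hne : S.Nonempty) {x y m : X}
    (hm : ∀ z ∈ S, dist z m ^ p ≤ 1 / 2 * dist z x ^ p + 1 / 2 * dist z y ^ p
      - k / 8 * dist x y ^ p) :
    k / 8 * dist x y ^ p ≤ (supDist S x ^ p + supDist S y ^ p) / 2 - circumradius S ^ p := by
  have hpow_le : ∀ w : X, ∀ z ∈ S, dist z w ^ p ≤ supDist S w ^ p := fun w z hz =>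
    Real.rpow_le_rpow dist_nonneg (dist_comm z w ▸ dist_le_supDist hS w hz) hp.le
  have hrm : supDist S m ^ p ≤
      1 / 2 * supDist S x ^ p + 1 / 2 * supDist S y ^ p - k / 8 * dist x y ^ p :=
    supDist_rpow_le hp hne fun z hz => by
      rw [dist_comm]
      linarith [hm z hz, hpow_le x z hz, hpow_le y z hz]
  have hrad : circumradius S ^ p ≤ supDist S m ^ p :=
    Real.rpow_le_rpow circumradius_nonneg (circumradius_le_supDist m) hp.le
  linarith

end Circumradius

theorem circumcenter_exists_unique_general
    {X : Type*} [MetricSpace X] [CompleteSpace X]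
    (p k : ℝ) (hp : 1 ≤ p) (hk : 0 < k)
    (geo : ∀ x y : X, ∃ m : X, dist x m = dist x y / 2 ∧ dist m y = dist x y / 2)
    (puc : ∀ x y z m : X,
      dist x m = dist x y / 2 → dist m y = dist x y / 2 →
      dist z m ^ p ≤ (1 / 2) * dist z x ^ p + (1 / 2) * dist z y ^ p
        - (k / 8) * dist x y ^ p)
    (S : Set X) (hS : S.Nonempty) (hSb : Bornology.IsBounded S) :
    ∃! z : X, (⨆ y : S, dist z (y : X)) = (⨅ x : X, ⨆ y : S, dist x (y : X)) ∧
      S ⊆ Metric.closedBall z (⨅ x : X, ⨆ y : S, dist x (y : X)) := by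
  have hp0 : 0 < p := by linarith
  have : Nonempty X := ⟨hS.some⟩
  have key : ∀ x y : X,
      k / 8 * dist x y ^ p ≤ (supDist S x ^ p + supDist S y ^ p) / 2 - circumradius S ^ p := by
    intro x y
    obtain ⟨m, hxm, hmy⟩ := geo x y
    exact circumradius_rpow_add_le hp0 hSb hS fun z _ => puc x y z m hxm hmy
  obtain ⟨u, hu⟩ := exists_seq_tendsto_circumradius S
  obtain ⟨z, hz, huniq⟩ := existsUnique_eq_of_tendsto_of_dist_rpow_le
    ((lipschitzWith_supDist hSb).continuous.rpow_const fun _ => .inr hp0.le)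
    (by positivity) hp0 (hu.rpow_const (.inr hp0.le)) key
  have hrz : supDist S z = circumradius S :=
    (Real.rpow_left_inj (supDist_nonneg z) circumradius_nonneg hp0.ne').1 hz
  exact ⟨z, ⟨hrz, (subset_closedBall_supDist hSb z).trans
    (Metric.closedBall_subset_closedBall hrz.le)⟩, fun w hw =>
    huniq w (congrArg (· ^ p) hw.1)⟩

/-- Existence and uniqueness of the circumcenter in a complete `p`-uniformly convex
space: there is a unique `z : X` with `⨆ y ∈ S, dist z y = rad S`; in particular
`S` is contained in the closed ball `B(z, rad S)`. -/
theorem circumcenter_exists_unique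
    {X : Type*} [MetricSpace X] [Nonempty X] [CompleteSpace X]
    (p k : ℝ) (hp : 1 ≤ p) (hk : 0 < k)
    (geo : ∀ x y : X, ∃ m : X, dist x m = dist x y / 2 ∧ dist m y = dist x y / 2)
    (puc : ∀ x y z m : X,
      dist x m = dist x y / 2 → dist m y = dist x y / 2 →
      dist z m ^ p ≤ (1 / 2) * dist z x ^ p + (1 / 2) * dist z y ^ p
        - (k / 8) * dist x y ^ p)
    (S : Set X) (hS : S.Nonempty) (hSb : Bornology.IsBounded S) :
    ∃! z : X, (⨆ y : S, dist z (y : X)) = (⨅ x : X, ⨆ y : S, dist x (y : X)) ∧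
      S ⊆ Metric.closedBall z (⨅ x : X, ⨆ y : S, dist x (y : X)) :=
  circumcenter_exists_unique_general p k hp hk geo puc S hS hSb
end

section
/- Let X be a p-uniformly convex metric space with parameter k > 0, let S be a nonempty bounded subset of X, and let (z_n) be a sequence in X such that sup_{y ∈ S} d(y, z_n) converges to rad(S) as n → ∞. Then (z_n) is a Cauchy sequence. -/
/-! Let `f n = sup_{y ∈ S} d(y, z n)` and `r = rad S`. For a midpoint `m` of `z i` and `z j`,
applying `p`-uniform convexity with every `y ∈ S` as base point and taking the supremum gives
`r ^ p ≤ sup_{y ∈ S} d(y, m) ^ p ≤ (f i ^ p + f j ^ p) / 2 - (k / 8) d(z i, z j) ^ p`.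
Since `f n → r`, the right-hand side forces `d(z i, z j) → 0`. -/

open Filter Topology Bornology

/-- Only the inequality of `p`-uniform convexity; the existence of midpoints is not part of it. -/
def IsPUniformlyConvex (p k : ℝ) (X : Type*) [PseudoMetricSpace X] : Prop :=
  ∀ x y z m : X, dist x m = dist x y / 2 → dist m y = dist x y / 2 →
    dist z m ^ p ≤ (1 / 2) * dist z x ^ p + (1 / 2) * dist z y ^ p - (k / 8) * dist x y ^ p

section

variable {X : Type*} [PseudoMetricSpace X] {S : Set X}

lemma Bornology.IsBounded.bddAbove_range_dist (hS : IsBounded S) (x : X) :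
    BddAbove (Set.range fun y : S => dist (y : X) x) := by
  obtain ⟨C, hC⟩ := (Metric.isBounded_iff_subset_closedBall x).mp hS
  exact ⟨C, by rintro _ ⟨y, rfl⟩; exact hC y.2⟩

lemma iInf_iSup_dist_le_iSup_dist (m : X) :
    ⨅ x : X, ⨆ y : S, dist x (y : X) ≤ ⨆ y : S, dist (y : X) m := by
  have hbdd : BddBelow (Set.range fun x : X => ⨆ y : S, dist x (y : X)) :=
    ⟨0, by rintro _ ⟨x, rfl⟩; exact Real.iSup_nonneg fun _ => dist_nonneg⟩
  simpa only [dist_comm m] using ciInf_le hbdd m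

lemma IsPUniformlyConvex.iSup_dist_midpoint_rpow_le {p k : ℝ} (h : IsPUniformlyConvex p k X)
    (hp : 0 < p) (hS : S.Nonempty) (hSb : IsBounded S) {x x' m : X}
    (hm : dist x m = dist x x' / 2) (hm' : dist m x' = dist x x' / 2) :
    (⨆ y : S, dist (y : X) m) ^ p ≤ (1 / 2) * (⨆ y : S, dist (y : X) x) ^ p
      + (1 / 2) * (⨆ y : S, dist (y : X) x') ^ p - (k / 8) * dist x x' ^ p := by
  set B := (1 / 2) * (⨆ y : S, dist (y : X) x) ^ p
    + (1 / 2) * (⨆ y : S, dist (y : X) x') ^ p - (k / 8) * dist x x' ^ p with hB_def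
  have hpoint : ∀ y : S, dist (y : X) m ^ p ≤ B := fun y => by
    have hx : dist (y : X) x ^ p ≤ (⨆ y : S, dist (y : X) x) ^ p :=
      Real.rpow_le_rpow dist_nonneg (le_ciSup (hSb.bddAbove_range_dist x) y) hp.le
    have hx' : dist (y : X) x' ^ p ≤ (⨆ y : S, dist (y : X) x') ^ p :=
      Real.rpow_le_rpow dist_nonneg (le_ciSup (hSb.bddAbove_range_dist x') y) hp.le
    linarith [h x x' y m hm hm', hB_def]
  have hB : 0 ≤ B := (Real.rpow_nonneg dist_nonneg p).trans (hpoint ⟨_, hS.some_mem⟩)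
  have : Nonempty S := hS.to_subtype
  have hsup : ⨆ y : S, dist (y : X) m ≤ B ^ p⁻¹ :=
    ciSup_le fun y => (Real.le_rpow_inv_iff_of_pos dist_nonneg hB hp).2 (hpoint y)
  exact (Real.le_rpow_inv_iff_of_pos (Real.iSup_nonneg fun _ => dist_nonneg) hB hp).1 hsup

end

lemma cauchySeq_of_rpow_le_half_add_sub {X : Type*} [PseudoMetricSpace X] {z : ℕ → X}
    {f : ℕ → ℝ} {r p c : ℝ} (hp : 0 < p) (hc : 0 < c) (hf : Tendsto f atTop (𝓝 r))
    (h : ∀ i j, r ^ p ≤ (1 / 2) * f i ^ p + (1 / 2) * f j ^ p - c * dist (z i) (z j) ^ p) :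
    CauchySeq z := by
  set g : ℕ × ℕ → ℝ := fun n => (((1 / 2) * f n.1 ^ p + (1 / 2) * f n.2 ^ p - r ^ p) / c) ^ p⁻¹
  have hfp : Tendsto (fun n => f n ^ p) atTop (𝓝 (r ^ p)) := hf.rpow_const (Or.inr hp.le)
  have hg : Tendsto g atTop (𝓝 0) := by
    have := ((((hfp.comp tendsto_fst).const_mul (1 / 2)).add
      ((hfp.comp tendsto_snd).const_mul (1 / 2))).sub_const (r ^ p)).div_const c
      |>.rpow_const (Or.inr (inv_nonneg.mpr hp.le))
    rwa [show ((1 / 2) * r ^ p + (1 / 2) * r ^ p - r ^ p) / c = 0 by ring,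
      Real.zero_rpow (inv_ne_zero hp.ne'), prod_atTop_atTop_eq] at this
  refine cauchySeq_iff_tendsto_dist_atTop_0.2 <|
    squeeze_zero (fun _ => dist_nonneg) (fun n => ?_) hg
  have hdp : dist (z n.1) (z n.2) ^ p ≤
      ((1 / 2) * f n.1 ^ p + (1 / 2) * f n.2 ^ p - r ^ p) / c := by
    rw [le_div_iff₀ hc]; linarith [h n.1 n.2]
  exact (Real.le_rpow_inv_iff_of_pos dist_nonneg
    ((Real.rpow_nonneg dist_nonneg p).trans hdp) hp).2 hdp

/-- In a `p`-uniformly convex space, any sequence `(z n)` with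
`⨆ y ∈ S, dist y (z n) → rad S` is a Cauchy sequence. -/
theorem minimizing_sequence_cauchy
    {X : Type*} [MetricSpace X]
    (p k : ℝ) (hp : 1 ≤ p) (hk : 0 < k)
    (geo : ∀ x y : X, ∃ m : X, dist x m = dist x y / 2 ∧ dist m y = dist x y / 2)
    (puc : ∀ x y z m : X,
      dist x m = dist x y / 2 → dist m y = dist x y / 2 →
      dist z m ^ p ≤ (1 / 2) * dist z x ^ p + (1 / 2) * dist z y ^ p
        - (k / 8) * dist x y ^ p)
    (S : Set X) (hS : S.Nonempty) (hSb : Bornology.IsBounded S)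
    (z : ℕ → X)
    (hz : Filter.Tendsto (fun n => ⨆ y : S, dist (y : X) (z n)) Filter.atTop
      (nhds (⨅ x : X, ⨆ y : S, dist x (y : X)))) :
    CauchySeq z := by
  have hp0 : 0 < p := by linarith
  have hr : 0 ≤ ⨅ x : X, ⨆ y : S, dist x (y : X) :=
    Real.iInf_nonneg fun _ => Real.iSup_nonneg fun _ => dist_nonneg
  refine cauchySeq_of_rpow_le_half_add_sub hp0 (by positivity : 0 < k / 8) hz fun i j => ?_
  obtain ⟨m, hm, hm'⟩ := geo (z i) (z j)
  calc (⨅ x : X, ⨆ y : S, dist x (y : X)) ^ p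
      ≤ (⨆ y : S, dist (y : X) m) ^ p :=
        Real.rpow_le_rpow hr (iInf_iSup_dist_le_iSup_dist m) hp0.le
    _ ≤ _ := IsPUniformlyConvex.iSup_dist_midpoint_rpow_le puc hp0 hS hSb hm hm'
end

section
/- Let X be a nonempty bounded complete p-uniformly convex metric space with parameter k > 0 and set C = (1 + 2^(p−3)·k/(2^(p−1) − 1))^(1/p). Then every uniformly L-lipschitzian mapping T : X → X with L < C has a fixed point. -/
/-!
For `x : X` let `r x z = limsup_n d(Tⁿ x, z)`. By `p`-uniform convexity, `(r x ·) ^ p` is uniformly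
convex along midpoints, so it attains its minimum at some `x₀`; halving repeatedly towards `x₀`
gives `r x y ^ p - r x x₀ ^ p ≥ 2^(p-3) k / (2^(p-1) - 1) · d(x₀, y) ^ p`. As
`r x (Tᵐ x₀) ≤ L · r x x₀`, this yields `d(x₀, Tᵐ x₀) ≤ θ · r x x₀` for all `m`, with `θ < 1`
precisely because `L` is below the threshold. Iterating `x ↦ x₀` therefore produces a Cauchy
sequence along which `d(·, T ·) → 0`, and its limit is a fixed point.
-/

open Filter Topology Finset

section Limsup

variable {ι : Type*} {F : Filter ι} {u v w : ι → ℝ} {a b c : ℝ}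

lemma limsup_le_mul_add_mul_add (hu : IsCoboundedUnder (· ≤ ·) F u)
    (hv : IsBoundedUnder (· ≤ ·) F v) (hw : IsBoundedUnder (· ≤ ·) F w) (ha : 0 ≤ a)
    (hb : 0 ≤ b) (h : ∀ᶠ i in F, u i ≤ a * v i + b * w i + c) :
    limsup u F ≤ a * limsup v F + b * limsup w F + c := by
  have hδ : ∀ δ > 0, limsup u F ≤ a * (limsup v F + δ) + b * (limsup w F + δ) + c := by
    intro δ hδ
    refine limsup_le_of_le hu ?_
    filter_upwards [h, eventually_lt_of_limsup_lt (lt_add_of_pos_right _ hδ) hv,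
      eventually_lt_of_limsup_lt (lt_add_of_pos_right _ hδ) hw] with i hi hvi hwi
    calc u i ≤ a * v i + b * w i + c := hi
      _ ≤ a * (limsup v F + δ) + b * (limsup w F + δ) + c := by gcongr
  refine ge_of_tendsto (x := 𝓝[>] (0 : ℝ)) (tendsto_nhdsWithin_of_tendsto_nhds ?_)
    (eventually_nhdsWithin_of_forall hδ)
  exact Continuous.tendsto' (by fun_prop) _ _ (by simp)

lemma limsup_le_mul_add (hu : IsCoboundedUnder (· ≤ ·) F u) (hv : IsBoundedUnder (· ≤ ·) F v)
    (ha : 0 ≤ a) (h : ∀ᶠ i in F, u i ≤ a * v i + c) : limsup u F ≤ a * limsup v F + c := by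
  simpa using limsup_le_mul_add_mul_add (b := 0) hu hv hv ha le_rfl (by simpa using h)

lemma limsup_rpow [NeBot F] {p : ℝ} (hp : 0 ≤ p) (hu0 : ∀ i, 0 ≤ u i)
    (hu : IsBoundedUnder (· ≤ ·) F u) : limsup (fun i => u i ^ p) F = limsup u F ^ p := by
  -- `t ↦ max t 0 ^ p` is a monotone continuous extension of `t ↦ t ^ p` from `[0, ∞)`.
  have hmono : Monotone fun t : ℝ => max t 0 ^ p := fun s t hst =>
    Real.rpow_le_rpow (le_max_right _ _) (max_le_max_right 0 hst) hp
  have hcont : Continuous fun t : ℝ => max t 0 ^ p :=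
    (continuous_id.max continuous_const).rpow_const fun _ => Or.inr hp
  have hlim0 : 0 ≤ limsup u F := le_limsup_of_frequently_le (Frequently.of_forall hu0) hu
  have := hmono.map_limsup_of_continuousAt u hcont.continuousAt hu
    (isCoboundedUnder_le_of_le F hu0)
  simpa [Function.comp_def, hu0, hlim0] using this.symm

end Limsup

section MidpointUniformlyConvex

variable {X : Type*} [MetricSpace X]

def MidpointUniformlyConvex (c p : ℝ) (ψ : X → ℝ) : Prop :=
  ∀ x y m : X, dist x m = dist x y / 2 → dist m y = dist x y / 2 →
    ψ m ≤ (1 / 2) * ψ x + (1 / 2) * ψ y - c * dist x y ^ p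

namespace MidpointUniformlyConvex

variable {c p : ℝ} {ψ : X → ℝ}

theorem exists_forall_le [Nonempty X] [CompleteSpace X] (hψ : MidpointUniformlyConvex c p ψ)
    (geo : ∀ x y : X, ∃ m : X, dist x m = dist x y / 2 ∧ dist m y = dist x y / 2)
    (hc : 0 < c) (hp : 0 < p) (hcont : Continuous ψ) (hbdd : BddBelow (Set.range ψ)) :
    ∃ x₀, ∀ z, ψ x₀ ≤ ψ z := by
  set ι := ⨅ z, ψ z
  set δ : ℕ → ℝ := fun i => 1 / (i + 1)
  have hδ : ∀ i : ℕ, ∃ z, ψ z < ι + c * δ i ^ p := fun i =>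
    exists_lt_of_ciInf_lt (lt_add_of_pos_right _ (by positivity))
  choose z hz using hδ
  have hδ_anti : ∀ i N, N ≤ i → c * δ i ^ p ≤ c * δ N ^ p := fun i N hi => by
    simp only [δ]; gcongr
  have hdist : ∀ i j N, N ≤ i → N ≤ j → dist (z i) (z j) ≤ δ N := by
    intro i j N hi hj
    obtain ⟨m, hm₁, hm₂⟩ := geo (z i) (z j)
    have hm : ι ≤ ψ m := ciInf_le hbdd m
    have := hψ _ _ _ hm₁ hm₂
    have hcd : c * dist (z i) (z j) ^ p ≤ c * δ N ^ p := by
      linarith [hz i, hz j, hδ_anti i N hi, hδ_anti j N hj]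
    exact (Real.rpow_le_rpow_iff dist_nonneg (by positivity) hp).1
      (le_of_mul_le_mul_left hcd hc)
  obtain ⟨x₀, hx₀⟩ := cauchySeq_tendsto_of_complete
    (cauchySeq_of_le_tendsto_0 δ hdist tendsto_one_div_add_atTop_nhds_zero_nat)
  have hι : Tendsto (fun i => ι + c * δ i ^ p) atTop (𝓝 ι) := by
    simpa [δ, Real.zero_rpow hp.ne'] using
      ((tendsto_one_div_add_atTop_nhds_zero_nat.rpow_const (Or.inr hp.le)).const_mul c).const_add ι
  refine ⟨x₀, fun w => ?_⟩
  calc ψ x₀ ≤ ι := le_of_tendsto_of_tendsto' ((hcont.tendsto x₀).comp hx₀) hι fun i => (hz i).le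
    _ ≤ ψ w := ciInf_le hbdd w

theorem geom_sum_mul_dist_rpow_le (hψ : MidpointUniformlyConvex c p ψ)
    (geo : ∀ x y : X, ∃ m : X, dist x m = dist x y / 2 ∧ dist m y = dist x y / 2)
    {x₀ : X} (hmin : ∀ z, ψ x₀ ≤ ψ z) (n : ℕ) (y : X) :
    2 * c * (∑ i ∈ range n, (2 / 2 ^ p) ^ i) * dist x₀ y ^ p ≤ ψ y - ψ x₀ := by
  induction n generalizing y with
  | zero => simpa using hmin y
  | succ n ih =>
    -- apply the induction hypothesis to the midpoint of `x₀` and `y`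
    obtain ⟨m, hm₁, hm₂⟩ := geo x₀ y
    have hmid := hψ _ _ _ hm₁ hm₂
    have hm := ih m
    rw [hm₁, Real.div_rpow dist_nonneg zero_le_two] at hm
    have h2p : (0 : ℝ) < 2 ^ p := by positivity
    calc 2 * c * (∑ i ∈ range (n + 1), (2 / 2 ^ p) ^ i) * dist x₀ y ^ p
        = 2 * (2 * c * (∑ i ∈ range n, (2 / 2 ^ p) ^ i) * (dist x₀ y ^ p / 2 ^ p))
          + 2 * c * dist x₀ y ^ p := by
          rw [geom_sum_succ]; field_simp
      _ ≤ ψ y - ψ x₀ := by linarith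

theorem mul_dist_rpow_le_sub (hψ : MidpointUniformlyConvex c p ψ)
    (geo : ∀ x y : X, ∃ m : X, dist x m = dist x y / 2 ∧ dist m y = dist x y / 2)
    (hp : 1 < p) {x₀ : X} (hmin : ∀ z, ψ x₀ ≤ ψ z) (y : X) :
    c * 2 ^ p / (2 ^ (p - 1) - 1) * dist x₀ y ^ p ≤ ψ y - ψ x₀ := by
  have h2p : 2 < (2 : ℝ) ^ p := by
    simpa using Real.rpow_lt_rpow_of_exponent_lt one_lt_two hp
  have hs : 2 / 2 ^ p < (1 : ℝ) := (div_lt_one (by positivity)).2 h2p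
  have hsum := (hasSum_geometric_of_lt_one (by positivity) hs).tendsto_sum_nat
  have hconst : 2 * c * (1 - 2 / 2 ^ p)⁻¹ = c * 2 ^ p / (2 ^ (p - 1) - 1) := by
    rw [Real.rpow_sub_one two_ne_zero]
    field_simp
  rw [← hconst]
  exact le_of_tendsto' ((hsum.const_mul (2 * c)).mul_const (dist x₀ y ^ p))
    (hψ.geom_sum_mul_dist_rpow_le geo hmin · y)

end MidpointUniformlyConvex

end MidpointUniformlyConvex

theorem exists_fixedPoint_of_forall_exists_dist_le {X : Type*} [MetricSpace X] [Nonempty X]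
    [CompleteSpace X] {T : X → X} (hT : Continuous T) {f : X → ℝ} {K θ : ℝ} (hK : 0 ≤ K)
    (hθ₀ : 0 ≤ θ) (hθ₁ : θ < 1) (hdisp : ∀ x, dist x (T x) ≤ K * f x)
    (hstep : ∀ x, ∃ y, dist x y ≤ K * f x ∧ f y ≤ θ * f x) : ∃ x, T x = x := by
  choose g hg using hstep
  set x₀ := Classical.arbitrary X
  set xs : ℕ → X := fun j => g^[j] x₀
  have hxs_succ : ∀ j, xs (j + 1) = g (xs j) := fun j => Function.iterate_succ_apply' g j x₀
  have hf : ∀ j, f (xs j) ≤ θ ^ j * f x₀ := by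
    intro j
    induction j with
    | zero => simp [xs]
    | succ j ih =>
      calc f (xs (j + 1)) ≤ θ * f (xs j) := hxs_succ j ▸ (hg (xs j)).2
        _ ≤ θ ^ (j + 1) * f x₀ := by rw [pow_succ']; nlinarith
  have hK_f : ∀ j, K * f (xs j) ≤ K * f x₀ * θ ^ j := fun j => by
    nlinarith [mul_le_mul_of_nonneg_left (hf j) hK]
  obtain ⟨x, hx⟩ := cauchySeq_tendsto_of_complete <| cauchySeq_of_le_geometric θ (K * f x₀) hθ₁
    fun j => hxs_succ j ▸ (hg (xs j)).1.trans (hK_f j)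
  have hdisp_lim : Tendsto (fun j => dist (xs j) (T (xs j))) atTop (𝓝 0) := by
    refine squeeze_zero (fun _ => dist_nonneg) (fun j => (hdisp (xs j)).trans (hK_f j)) ?_
    simpa using (tendsto_pow_atTop_nhds_zero_of_lt_one hθ₀ hθ₁).const_mul (K * f x₀)
  exact ⟨x, tendsto_nhds_unique ((hT.tendsto x).comp hx) (hx.congr_dist hdisp_lim)⟩

section AsymptoticRadius

variable {X : Type*} [MetricSpace X] {T : X → X} {L c p : ℝ}

lemma isCoboundedUnder_le_dist {ι : Type*} (F : Filter ι) [NeBot F] (u v : ι → X) :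
    IsCoboundedUnder (· ≤ ·) F fun i => dist (u i) (v i) :=
  isCoboundedUnder_le_of_le F fun _ => dist_nonneg

variable [BoundedSpace X]

lemma isBoundedUnder_le_dist_rpow {ι : Type*} (F : Filter ι) (u v : ι → X) (hp : 0 ≤ p) :
    IsBoundedUnder (· ≤ ·) F fun i => dist (u i) (v i) ^ p :=
  isBoundedUnder_of ⟨Metric.diam (Set.univ : Set X) ^ p, fun _ => Real.rpow_le_rpow dist_nonneg
    (Metric.dist_le_diam_of_mem (Bornology.IsBounded.all _) trivial trivial) hp⟩

lemma isBoundedUnder_le_dist {ι : Type*} (F : Filter ι) (u v : ι → X) :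
    IsBoundedUnder (· ≤ ·) F fun i => dist (u i) (v i) := by
  simpa using isBoundedUnder_le_dist_rpow F u v zero_le_one

variable (T) in
noncomputable def asymptoticRadiusAt (x z : X) : ℝ := limsup (fun n => dist (T^[n] x) z) atTop

lemma asymptoticRadiusAt_nonneg (x z : X) : 0 ≤ asymptoticRadiusAt T x z :=
  le_limsup_of_frequently_le (Frequently.of_forall fun _ => dist_nonneg)
    (isBoundedUnder_le_dist _ _ _)

lemma asymptoticRadiusAt_le_add_dist (x z w : X) :
    asymptoticRadiusAt T x z ≤ asymptoticRadiusAt T x w + dist w z := by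
  simpa [asymptoticRadiusAt] using limsup_le_mul_add (isCoboundedUnder_le_dist _ _ _)
    (isBoundedUnder_le_dist _ _ _) zero_le_one
    (Eventually.of_forall fun n => by simpa using dist_triangle (T^[n] x) w z)

lemma continuous_asymptoticRadiusAt (x : X) : Continuous (asymptoticRadiusAt T x) :=
  (LipschitzWith.of_le_add fun z w => by
    simpa [dist_comm] using asymptoticRadiusAt_le_add_dist (T := T) x z w).continuous

lemma dist_le_asymptoticRadiusAt_add (x z w : X) :
    dist z w ≤ asymptoticRadiusAt T x z + asymptoticRadiusAt T x w := by
  have := limsup_le_mul_add_mul_add (u := fun _ => dist z w) (c := 0)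
    (isCoboundedUnder_le_of_le atTop fun _ => dist_nonneg) (isBoundedUnder_le_dist _ _ _)
    (isBoundedUnder_le_dist _ _ _) zero_le_one zero_le_one
    (Eventually.of_forall fun n => by simpa [dist_comm] using dist_triangle z (T^[n] x) w)
  simpa [asymptoticRadiusAt, dist_comm] using this

lemma asymptoticRadiusAt_iterate_le {m : ℕ}
    (hTm : ∀ a b, dist (T^[m] a) (T^[m] b) ≤ L * dist a b) (hL : 0 ≤ L) (x z : X) :
    asymptoticRadiusAt T x (T^[m] z) ≤ L * asymptoticRadiusAt T x z := by
  rw [asymptoticRadiusAt, ← limsup_nat_add _ m]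
  simpa [asymptoticRadiusAt] using limsup_le_mul_add (c := 0) (isCoboundedUnder_le_dist _ _ _)
    (isBoundedUnder_le_dist _ _ _) hL (Eventually.of_forall fun n => by
      simpa [add_comm n m, Function.iterate_add_apply] using hTm (T^[n] x) z)

lemma dist_apply_le_asymptoticRadiusAt (hT : ∀ a b, dist (T a) (T b) ≤ L * dist a b)
    (hL : 0 ≤ L) (x : X) : dist x (T x) ≤ (1 + L) * asymptoticRadiusAt T x x := by
  have hshift : limsup (fun n => dist (T^[n + 1] x) x) atTop = asymptoticRadiusAt T x x :=
    limsup_nat_add (fun n => dist (T^[n] x) x) 1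
  have := limsup_le_mul_add_mul_add (u := fun _ => dist x (T x))
    (v := fun n => dist (T^[n + 1] x) x) (w := fun n => dist (T^[n] x) x) (c := 0)
    (isCoboundedUnder_le_of_le atTop fun _ => dist_nonneg) (isBoundedUnder_le_dist _ _ _)
    (isBoundedUnder_le_dist _ _ _) zero_le_one hL (Eventually.of_forall fun n => by
      have h₁ := dist_triangle x (T^[n + 1] x) (T x)
      have h₂ := hT (T^[n] x) x
      rw [Function.iterate_succ_apply'] at h₁ ⊢
      rw [dist_comm x (T (T^[n] x))] at h₁
      linarith)
  rw [hshift, limsup_const] at this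
  change _ ≤ _ + L * asymptoticRadiusAt T x x + 0 at this
  linarith

lemma midpointUniformlyConvex_asymptoticRadiusAt_rpow
    (h : ∀ z : X, MidpointUniformlyConvex c p (dist z · ^ p)) (hp : 0 ≤ p) (x : X) :
    MidpointUniformlyConvex c p (asymptoticRadiusAt T x · ^ p) := by
  intro y₁ y₂ m hm₁ hm₂
  simp only [asymptoticRadiusAt]
  rw [← limsup_rpow hp (fun _ => dist_nonneg) (isBoundedUnder_le_dist _ _ _),
    ← limsup_rpow hp (fun _ => dist_nonneg) (isBoundedUnder_le_dist _ _ _),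
    ← limsup_rpow hp (fun _ => dist_nonneg) (isBoundedUnder_le_dist _ _ _)]
  exact limsup_le_mul_add_mul_add
    (isCoboundedUnder_le_of_le atTop fun _ => Real.rpow_nonneg dist_nonneg p)
    (isBoundedUnder_le_dist_rpow _ _ _ hp) (isBoundedUnder_le_dist_rpow _ _ _ hp)
    (by norm_num) (by norm_num) (Eventually.of_forall fun n => h _ _ _ _ hm₁ hm₂)

lemma exists_forall_asymptoticRadiusAt_le [Nonempty X] [CompleteSpace X]
    (geo : ∀ x y : X, ∃ m : X, dist x m = dist x y / 2 ∧ dist m y = dist x y / 2)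
    (h : ∀ z : X, MidpointUniformlyConvex c p (dist z · ^ p)) (hc : 0 < c) (hp : 0 < p)
    (x : X) : ∃ x₀, ∀ z, asymptoticRadiusAt T x x₀ ≤ asymptoticRadiusAt T x z := by
  obtain ⟨x₀, hx₀⟩ :=
    (midpointUniformlyConvex_asymptoticRadiusAt_rpow (T := T) h hp.le x).exists_forall_le
      geo hc hp ((continuous_asymptoticRadiusAt x).rpow_const fun _ => Or.inr hp.le)
      ⟨0, by rintro _ ⟨z, rfl⟩; exact Real.rpow_nonneg (asymptoticRadiusAt_nonneg x z) p⟩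
  exact ⟨x₀, fun z => (Real.rpow_le_rpow_iff (asymptoticRadiusAt_nonneg x x₀)
    (asymptoticRadiusAt_nonneg x z) hp).1 (hx₀ z)⟩

lemma asymptoticRadiusAt_self_le_mul_of_forall_le
    (geo : ∀ x y : X, ∃ m : X, dist x m = dist x y / 2 ∧ dist m y = dist x y / 2)
    (h : ∀ z : X, MidpointUniformlyConvex c p (dist z · ^ p)) (hc : 0 < c) (hp : 1 < p)
    (hT : ∀ n a b, dist (T^[n] a) (T^[n] b) ≤ L * dist a b) (hL : 0 ≤ L) {θ : ℝ} (hθ : 0 ≤ θ)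
    (hLθ : L ^ p - 1 ≤ c * 2 ^ p / (2 ^ (p - 1) - 1) * θ ^ p)
    {x x₀ : X} (hx₀ : ∀ z, asymptoticRadiusAt T x x₀ ≤ asymptoticRadiusAt T x z) :
    asymptoticRadiusAt T x₀ x₀ ≤ θ * asymptoticRadiusAt T x x₀ := by
  set R := asymptoticRadiusAt T x x₀
  have hR : 0 ≤ R := asymptoticRadiusAt_nonneg x x₀
  have hS : 0 < c * 2 ^ p / (2 ^ (p - 1) - 1) := by
    have : 1 < (2 : ℝ) ^ (p - 1) := Real.one_lt_rpow one_lt_two (by linarith)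
    exact div_pos (by positivity) (by linarith)
  have horbit : ∀ m, dist x₀ (T^[m] x₀) ≤ θ * R := by
    intro m
    have hgrowth :=
      (midpointUniformlyConvex_asymptoticRadiusAt_rpow h (by linarith) x).mul_dist_rpow_le_sub
        geo hp (fun z => Real.rpow_le_rpow hR (hx₀ z) (by linarith)) (T^[m] x₀)
    have hmove : asymptoticRadiusAt T x (T^[m] x₀) ^ p ≤ L ^ p * R ^ p := by
      rw [← Real.mul_rpow hL hR]
      exact Real.rpow_le_rpow (asymptoticRadiusAt_nonneg x _)
        (asymptoticRadiusAt_iterate_le (hT m) hL x x₀) (by linarith)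
    have : dist x₀ (T^[m] x₀) ^ p ≤ (θ * R) ^ p := by
      rw [Real.mul_rpow hθ hR]
      refine le_of_mul_le_mul_left ?_ hS
      nlinarith [Real.rpow_nonneg hR p]
    exact (Real.rpow_le_rpow_iff dist_nonneg (by positivity) (by linarith)).1 this
  exact limsup_le_of_le (isCoboundedUnder_le_dist _ _ _)
    (Eventually.of_forall fun m => dist_comm x₀ (T^[m] x₀) ▸ horbit m)

end AsymptoticRadius

section Threshold

variable {p k L : ℝ}

noncomputable def lipschitzThreshold (p k : ℝ) : ℝ :=
  (1 + 2 ^ (p - 3) * k / (2 ^ (p - 1) - 1)) ^ (1 / p)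

-- At `p = 1` the denominator vanishes, so `x / 0 = 0` makes the threshold equal to `1`.
lemma one_lt_of_one_le_lt_lipschitzThreshold (hp : 1 ≤ p) (hL₁ : 1 ≤ L)
    (hL : L < lipschitzThreshold p k) : 1 < p := by
  refine lt_of_le_of_ne hp fun hp₁ => ?_
  subst hp₁
  norm_num [lipschitzThreshold] at hL
  linarith

lemma exists_rpow_sub_one_le_of_lt_lipschitzThreshold (hp : 1 < p) (hk : 0 < k) (hL₁ : 1 ≤ L)
    (hL : L < lipschitzThreshold p k) :
    ∃ θ, 0 ≤ θ ∧ θ < 1 ∧ L ^ p - 1 ≤ k / 8 * 2 ^ p / (2 ^ (p - 1) - 1) * θ ^ p := by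
  have hS_eq : 2 ^ (p - 3) * k / (2 ^ (p - 1) - 1) = k / 8 * 2 ^ p / (2 ^ (p - 1) - 1) := by
    rw [show (2 : ℝ) ^ (p - 3) = 2 ^ p / 8 by rw [Real.rpow_sub two_pos]; norm_num]
    ring
  rw [lipschitzThreshold, hS_eq, one_div] at hL
  set S := k / 8 * 2 ^ p / (2 ^ (p - 1) - 1)
  have hS : 0 < S :=
    div_pos (by positivity) (by linarith [Real.one_lt_rpow one_lt_two (by linarith : 0 < p - 1)])
  have hLp : L ^ p < 1 + S :=
    (Real.lt_rpow_inv_iff_of_pos (by linarith) (by positivity) (by linarith)).1 hL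
  have hq : 0 ≤ (L ^ p - 1) / S :=
    div_nonneg (by linarith [Real.one_le_rpow hL₁ (by linarith : 0 ≤ p)]) hS.le
  refine ⟨((L ^ p - 1) / S) ^ p⁻¹, by positivity,
    Real.rpow_lt_one hq ((div_lt_one hS).2 (by linarith)) (by positivity), ?_⟩
  rw [Real.rpow_inv_rpow hq (by linarith), mul_div_cancel₀ _ hS.ne']

end Threshold

/-- Fixed point theorem: in a nonempty bounded complete `p`-uniformly convex space with
parameter `k > 0`, every uniformly `L`-lipschitzian map with
`L < (1 + 2^(p-3) * k / (2^(p-1) - 1))^(1/p)` has a fixed point. -/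
theorem fixed_point_uniformly_lipschitzian
    {X : Type*} [MetricSpace X] [Nonempty X] [CompleteSpace X]
    (hXb : Bornology.IsBounded (Set.univ : Set X))
    (p k : ℝ) (hp : 1 ≤ p) (hk : 0 < k)
    (geo : ∀ x y : X, ∃ m : X, dist x m = dist x y / 2 ∧ dist m y = dist x y / 2)
    (puc : ∀ x y z m : X,
      dist x m = dist x y / 2 → dist m y = dist x y / 2 →
      dist z m ^ p ≤ (1 / 2) * dist z x ^ p + (1 / 2) * dist z y ^ p
        - (k / 8) * dist x y ^ p)
    (T : X → X) (L : ℝ)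
    (hL : L < (1 + 2 ^ (p - 3) * k / (2 ^ (p - 1) - 1)) ^ (1 / p))
    (hT : ∀ (n : ℕ) (x y : X), dist (T^[n] x) (T^[n] y) ≤ L * dist x y) :
    ∃ x : X, T x = x := by
  have : BoundedSpace X := Bornology.isBounded_univ.1 hXb
  rcases subsingleton_or_nontrivial X with hX | hX
  · exact ⟨Classical.arbitrary X, Subsingleton.elim _ _⟩
  have hL₁ : 1 ≤ L := by
    obtain ⟨a, b, hab⟩ := exists_pair_ne X
    exact le_of_mul_le_mul_right (by simpa using hT 0 a b) (dist_pos.2 hab)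
  have hp₁ := one_lt_of_one_le_lt_lipschitzThreshold hp hL₁ hL
  obtain ⟨θ, hθ₀, hθ₁, hLθ⟩ := exists_rpow_sub_one_le_of_lt_lipschitzThreshold hp₁ hk hL₁ hL
  have hT₁ : ∀ a b, dist (T a) (T b) ≤ L * dist a b := by simpa using hT 1
  have huc : ∀ z : X, MidpointUniformlyConvex (k / 8) p (dist z · ^ p) :=
    fun z x y m => puc x y z m
  refine exists_fixedPoint_of_forall_exists_dist_le (LipschitzWith.of_dist_le' hT₁).continuous
    (by linarith) hθ₀ hθ₁ (dist_apply_le_asymptoticRadiusAt hT₁ (by linarith)) fun x => ?_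
  obtain ⟨x₀, hx₀⟩ :=
    exists_forall_asymptoticRadiusAt_le (T := T) geo huc (by positivity) (by linarith) x
  refine ⟨x₀, ?_, ?_⟩
  · nlinarith [dist_le_asymptoticRadiusAt_add (T := T) x x x₀, hx₀ x,
      asymptoticRadiusAt_nonneg (T := T) x x]
  · calc asymptoticRadiusAt T x₀ x₀ ≤ θ * asymptoticRadiusAt T x x₀ :=
          asymptoticRadiusAt_self_le_mul_of_forall_le geo huc (by positivity) hp₁ hT
            (by linarith) hθ₀ hLθ hx₀
      _ ≤ θ * asymptoticRadiusAt T x x := by gcongr; exact hx₀ x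
end

section
/- Let X be a p-uniformly convex metric space with parameter k > 0 and set C = (1 + 2^(p−3)·k/(2^(p−1) − 1))^(1/p). Then balls in X are c-regular for every c with 1 ≤ c < C; that is, for each ℓ with 1 ≤ ℓ < C there exist μ, α ∈ (0,1) such that for all x, y ∈ X and r > 0 with d(x,y) ≥ (1 − μ)·r, there exists z ∈ X with B(x, (1+μ)·r) ∩ B(y, ℓ·(1+μ)·r) ⊆ B(z, α·r). In particular the Lifshitz character L(X) = sup{c ≥ 1 : balls in X are c-regular} satisfies L(X) ≥ C. -/
noncomputable def pucS (p : ℝ) : ℕ → ℝ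
  | 0 => 0
  | (n+1) => pucS p n / 2 + ((2:ℝ) ^ n) ^ (-p)

lemma pucS_nonneg (p : ℝ) (n : ℕ) : 0 ≤ pucS p n := by
  induction n with
  | zero => simp [pucS]
  | succ n ih =>
    have : (0:ℝ) ≤ ((2:ℝ) ^ n) ^ (-p) := Real.rpow_nonneg (by positivity) _
    simp only [pucS]; linarith

lemma pucS_sum (p : ℝ) (n : ℕ) :
    (2:ℝ) ^ n * pucS p n = 2 * ∑ j ∈ Finset.range n, ((2:ℝ) ^ (1 - p)) ^ j := by
  induction n with
  | zero => simp [pucS]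
  | succ n ih =>
    have h2 : (0:ℝ) < 2 := by norm_num
    have e1 : ((2:ℝ) ^ n) ^ (-p) = (2:ℝ) ^ ((n:ℝ) * (-p)) := by
      rw [← Real.rpow_natCast 2 n, ← Real.rpow_mul (by norm_num)]
    have e2 : ((2:ℝ) ^ (1 - p)) ^ n = (2:ℝ) ^ ((1 - p) * (n:ℝ)) := by
      rw [← Real.rpow_natCast ((2:ℝ) ^ (1-p)) n, ← Real.rpow_mul (by norm_num)]
    have e3 : (2:ℝ) ^ (n+1) * ((2:ℝ) ^ n) ^ (-p) = 2 * ((2:ℝ) ^ (1 - p)) ^ n := by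
      rw [e1, e2]
      rw [show ((2:ℝ) ^ (n+1) : ℝ) = (2:ℝ) ^ (((n:ℝ) + 1 : ℝ)) by
        rw [← Real.rpow_natCast 2 (n+1)]; push_cast; ring_nf]
      rw [← Real.rpow_add h2]
      rw [show 2 * (2:ℝ) ^ ((1 - p) * (n:ℝ)) = 2 ^ (1 + (1-p)*(n:ℝ)) by
        rw [Real.rpow_add h2]; simp]
      congr 1; ring
    rw [Finset.sum_range_succ]
    simp only [pucS]
    rw [mul_add, mul_add]
    rw [show (2:ℝ) ^ (n+1) * (pucS p n / 2) = (2:ℝ)^n * pucS p n by ring, ih, e3]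

lemma puc_iterate {X : Type*} [MetricSpace X]
    (p k : ℝ)
    (geo : ∀ x y : X, ∃ m : X, dist x m = dist x y / 2 ∧ dist m y = dist x y / 2)
    (puc : ∀ x y z m : X,
      dist x m = dist x y / 2 → dist m y = dist x y / 2 →
      dist z m ^ p ≤ (1 / 2) * dist z x ^ p + (1 / 2) * dist z y ^ p
        - (k / 8) * dist x y ^ p)
    (x y : X) :
    ∃ m : ℕ → X, ∀ n : ℕ,
      dist x (m n) = dist x y / 2 ^ n ∧
      ∀ z : X,
      dist z (m n) ^ p ≤ (1 - ((2:ℝ)^n)⁻¹) * dist z x ^ p + ((2:ℝ)^n)⁻¹ * dist z y ^ p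
        - k / 8 * dist x y ^ p * pucS p n := by
  refine ⟨fun n => Nat.rec y (fun _ prev => (geo x prev).choose) n, ?_⟩
  intro n
  induction n with
  | zero =>
    constructor
    · simp
    · intro z
      simp [pucS]
  | succ n ih =>
    set m : ℕ → X := fun n => Nat.rec y (fun _ prev => (geo x prev).choose) n with hm
    have hgeo := (geo x (m n)).choose_spec
    have hstep : m (n+1) = (geo x (m n)).choose := rfl
    have h1 : dist x (m (n+1)) = dist x (m n) / 2 := by rw [hstep]; exact hgeo.1
    have h2 : dist (m (n+1)) (m n) = dist x (m n) / 2 := by rw [hstep]; exact hgeo.2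
    have hd : dist x (m (n+1)) = dist x y / 2 ^ (n+1) := by
      rw [h1, ih.1, pow_succ]; ring
    refine ⟨hd, fun z => ?_⟩
    have hpuc := puc x (m n) z (m (n+1)) h1 h2
    have hrw : dist x (m n) ^ p = dist x y ^ p * ((2:ℝ)^n) ^ (-p) := by
      rw [ih.1, Real.div_rpow dist_nonneg (by positivity), Real.rpow_neg (by positivity)]
      ring
    rw [hrw] at hpuc
    have hih := ih.2 z
    have hinv : ((2:ℝ)^(n+1))⁻¹ = ((2:ℝ)^n)⁻¹ / 2 := by
      rw [pow_succ]; field_simp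
    rw [hinv]
    simp only [pucS]
    linarith


set_option maxHeartbeats 1600000 in
/-- In a `p`-uniformly convex space with parameter `k > 0`, balls are `c`-regular for
every `c` with `1 ≤ c < C`, where `C = (1 + 2^(p-3) * k / (2^(p-1) - 1))^(1/p)`:
for each `ℓ ∈ [1, C)` there are `μ, α ∈ (0,1)` such that for all `x y` and `r > 0`
with `dist x y ≥ (1-μ)·r`, some closed ball of radius `α·r` contains
`B(x, (1+μ)·r) ∩ B(y, ℓ·(1+μ)·r)`.  (Hence the Lifshitz character of `X` is at
least `C`.) -/
theorem balls_regular_p_uniformly_convex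
    {X : Type*} [MetricSpace X]
    (p k : ℝ) (hp : 1 ≤ p) (hk : 0 < k)
    (geo : ∀ x y : X, ∃ m : X, dist x m = dist x y / 2 ∧ dist m y = dist x y / 2)
    (puc : ∀ x y z m : X,
      dist x m = dist x y / 2 → dist m y = dist x y / 2 →
      dist z m ^ p ≤ (1 / 2) * dist z x ^ p + (1 / 2) * dist z y ^ p
        - (k / 8) * dist x y ^ p)
    (l : ℝ) (hl1 : 1 ≤ l)
    (hlC : l < (1 + 2 ^ (p - 3) * k / (2 ^ (p - 1) - 1)) ^ (1 / p)) :
    ∃ μ ∈ Set.Ioo (0 : ℝ) 1, ∃ α ∈ Set.Ioo (0 : ℝ) 1,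
      ∀ x y : X, ∀ r : ℝ, 0 < r → (1 - μ) * r ≤ dist x y →
        ∃ z : X,
          Metric.closedBall x ((1 + μ) * r) ∩ Metric.closedBall y (l * ((1 + μ) * r))
            ⊆ Metric.closedBall z (α * r) := by
  have hp0 : (0:ℝ) < p := lt_of_lt_of_le one_pos hp
  rcases eq_or_lt_of_le hp with hp1 | hp1
  · -- p = 1 : the hypothesis hlC is contradictory
    exfalso
    rw [← hp1] at hlC
    rw [show ((1:ℝ) - 1) = 0 by ring, Real.rpow_zero] at hlC
    simp at hlC
    linarith
  -- now 1 < p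
  set q : ℝ := (2:ℝ) ^ (1 - p) with hqdef
  have hq1 : q < 1 := Real.rpow_lt_one_of_one_lt_of_neg one_lt_two (by linarith)
  have hq0 : 0 < q := Real.rpow_pos_of_pos two_pos _
  have hσ : 0 < 1 - q := by linarith
  have hden : (0:ℝ) < 2 ^ (p - 1) - 1 := by
    have : (1:ℝ) < 2 ^ (p - 1) :=
      (Real.one_lt_rpow_iff_of_pos two_pos).mpr (Or.inl ⟨one_lt_two, by linarith⟩)
    linarith
  have hBpos : (0:ℝ) < 1 + 2 ^ (p - 3) * k / (2 ^ (p - 1) - 1) := by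
    have : (0:ℝ) < 2 ^ (p - 3) * k / (2 ^ (p - 1) - 1) :=
      div_pos (mul_pos (Real.rpow_pos_of_pos two_pos _) hk) hden
    linarith
  have hlp : l ^ p < 1 + 2 ^ (p - 3) * k / (2 ^ (p - 1) - 1) := by
    have h1 := Real.rpow_lt_rpow (by linarith : (0:ℝ) ≤ l) hlC hp0
    rwa [one_div, Real.rpow_inv_rpow hBpos.le (ne_of_gt hp0)] at h1
  have hqinv : q = ((2:ℝ) ^ (p-1))⁻¹ := by
    rw [hqdef, show (1 - p) = -(p-1) by ring, Real.rpow_neg (by norm_num)]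
  have h4 : (2:ℝ) ^ (2:ℝ) = 4 := by
    have := Real.rpow_natCast (2:ℝ) 2
    norm_num at this
    linarith
  have h23 : (2:ℝ) ^ (p - 3) = 2 ^ (p-1) / 4 := by
    rw [show p - 3 = (p-1) - 2 by ring, Real.rpow_sub two_pos, h4]
  have hconst : 2 ^ (p - 3) * k / (2 ^ (p - 1) - 1) = (k/4) / (1 - q) := by
    have ha : (0:ℝ) < 2 ^ (p-1) := Real.rpow_pos_of_pos two_pos _
    rw [h23, hqinv]
    field_simp
  rw [hconst] at hlp
  -- pick n
  have hlt : (l ^ p - 1) * (1 - q) < k / 4 := by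
    have := (lt_div_iff₀ hσ).mp (by linarith : l ^ p - 1 < (k/4)/(1-q))
    linarith
  have hε : 0 < 1 - (l ^ p - 1) * (1 - q) * (4 / k) := by
    have h := mul_lt_mul_of_pos_right hlt (show (0:ℝ) < 4 / k by positivity)
    have h2 : k / 4 * (4 / k) = 1 := by field_simp
    linarith
  obtain ⟨n, hn⟩ := exists_pow_lt_of_lt_one hε hq1
  have hl0 : (1:ℝ) ≤ l ^ p := by
    have := Real.rpow_le_rpow zero_le_one hl1 hp0.le
    simpa using this
  have hkey : l ^ p - 1 < k / 8 * ((2:ℝ) ^ n * pucS p n) := by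
    rw [pucS_sum, ← hqdef, geom_sum_eq (ne_of_lt hq1)]
    have h6 : (l ^ p - 1) * (1 - q) < k / 4 * (1 - q ^ n) := by
      have h := mul_lt_mul_of_pos_left hn (show (0:ℝ) < k / 4 by positivity)
      have h2 : k / 4 * ((l ^ p - 1) * (1 - q) * (4 / k)) = (l ^ p - 1) * (1 - q) := by
        field_simp
      linarith
    have h7 : l ^ p - 1 < k / 4 * (1 - q ^ n) / (1 - q) := (lt_div_iff₀ hσ).mpr h6
    have h8 : k / 8 * (2 * ((q ^ n - 1) / (q - 1))) = k / 4 * (1 - q ^ n) / (1 - q) := by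
      rw [show q ^ n - 1 = -(1 - q ^ n) by ring, show q - 1 = -(1 - q) by ring,
        neg_div_neg_eq, mul_div_assoc]
      ring
    linarith
  -- setup constants
  set t : ℝ := ((2:ℝ) ^ n)⁻¹ with htdef
  have h2n : (1:ℝ) ≤ 2 ^ n := one_le_pow₀ (by norm_num)
  have ht0 : 0 < t := by positivity
  have ht1 : t ≤ 1 := inv_le_one_of_one_le₀ h2n
  set G : ℝ := 1 + t * (l ^ p - 1) with hGdef
  set H : ℝ := k / 8 * pucS p n with hHdef
  have hSnn : 0 ≤ pucS p n := pucS_nonneg p n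
  have hH0 : 0 ≤ H := by positivity
  have hGH : G - H < 1 := by
    have h := mul_lt_mul_of_pos_left hkey ht0
    have e : t * (k / 8 * ((2:ℝ) ^ n * pucS p n)) = H := by
      rw [hHdef, htdef]
      field_simp
    rw [e] at h
    rw [hGdef]
    linarith
  -- pick μ by continuity
  have hcont : ContinuousAt (fun μ : ℝ => (1 + μ) ^ p * G - H * (1 - μ) ^ p) 0 := by
    have c1 : ContinuousAt (fun μ : ℝ => (1 + μ) ^ p) 0 := by
      have := (Real.continuousAt_rpow_const ((1:ℝ) + 0) p (Or.inl (by norm_num))).comp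
        (by fun_prop : ContinuousAt (fun μ : ℝ => 1 + μ) 0)
      exact this
    have c2 : ContinuousAt (fun μ : ℝ => (1 - μ) ^ p) 0 := by
      have := (Real.continuousAt_rpow_const ((1:ℝ) - 0) p (Or.inl (by norm_num))).comp
        (by fun_prop : ContinuousAt (fun μ : ℝ => 1 - μ) 0)
      exact this
    exact (c1.mul continuousAt_const).sub (continuousAt_const.mul c2)
  have hf0 : (1 + (0:ℝ)) ^ p * G - H * (1 - (0:ℝ)) ^ p = G - H := by
    norm_num [Real.one_rpow]
  have hev : ∀ᶠ μ in nhdsWithin (0:ℝ) (Set.Ioi 0),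
      (1 + μ) ^ p * G - H * (1 - μ) ^ p < 1 := by
    have h := hcont.tendsto
    rw [hf0] at h
    exact (h.eventually_lt_const hGH).filter_mono nhdsWithin_le_nhds
  have hmem : Set.Ioo (0:ℝ) 1 ∈ nhdsWithin (0:ℝ) (Set.Ioi 0) :=
    Ioo_mem_nhdsGT_of_mem ⟨le_refl 0, one_pos⟩
  obtain ⟨μ, hfμ, hμIoo⟩ := (hev.and hmem).exists
  obtain ⟨hμ0, hμ1⟩ := hμIoo
  refine ⟨μ, ⟨hμ0, hμ1⟩, ?_⟩
  -- choose α
  set M : ℝ := max ((1 + μ) ^ p * G - H * (1 - μ) ^ p) ((2:ℝ) ^ (-p)) with hMdef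
  have hM0 : 0 < M := lt_of_lt_of_le (Real.rpow_pos_of_pos two_pos (-p)) (le_max_right _ _)
  have hM1 : M < 1 :=
    max_lt hfμ (Real.rpow_lt_one_of_one_lt_of_neg one_lt_two (by linarith))
  refine ⟨M ^ p⁻¹, ⟨Real.rpow_pos_of_pos hM0 _, Real.rpow_lt_one hM0.le hM1 (by positivity)⟩, ?_⟩
  have hαp : (M ^ p⁻¹) ^ p = M := Real.rpow_inv_rpow hM0.le (ne_of_gt hp0)
  intro x y r hr hdist
  obtain ⟨m, hm⟩ := puc_iterate p k geo puc x y
  refine ⟨m n, fun z' hz' => ?_⟩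
  obtain ⟨hz1, hz2⟩ := hz'
  rw [Metric.mem_closedBall] at hz1 hz2 ⊢
  have hαr0 : (0:ℝ) ≤ M ^ p⁻¹ * r := by positivity
  rw [← Real.rpow_le_rpow_iff dist_nonneg hαr0 hp0]
  have hkey2 := (hm n).2 z'
  have hA : dist z' x ^ p ≤ ((1 + μ) * r) ^ p := Real.rpow_le_rpow dist_nonneg hz1 hp0.le
  have hB : dist z' y ^ p ≤ (l * ((1 + μ) * r)) ^ p :=
    Real.rpow_le_rpow dist_nonneg hz2 hp0.le
  have hD : ((1 - μ) * r) ^ p ≤ dist x y ^ p :=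
    Real.rpow_le_rpow (by nlinarith) hdist hp0.le
  have step1 : dist z' (m n) ^ p ≤
      (1 - t) * ((1 + μ) * r) ^ p + t * (l * ((1 + μ) * r)) ^ p
        - k / 8 * (((1 - μ) * r) ^ p) * pucS p n := by
    have c1 := mul_le_mul_of_nonneg_left hA (by linarith : (0:ℝ) ≤ 1 - t)
    have c2 := mul_le_mul_of_nonneg_left hB ht0.le
    have c3 := mul_le_mul_of_nonneg_left hD (show (0:ℝ) ≤ k / 8 * pucS p n by positivity)
    nlinarith [hkey2]
  have e1 : ((1 + μ) * r) ^ p = (1 + μ) ^ p * r ^ p := Real.mul_rpow (by linarith) hr.le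
  have e2 : (l * ((1 + μ) * r)) ^ p = l ^ p * ((1 + μ) ^ p * r ^ p) := by
    rw [Real.mul_rpow (by linarith) (by nlinarith), e1]
  have e3 : ((1 - μ) * r) ^ p = (1 - μ) ^ p * r ^ p := Real.mul_rpow (by linarith) hr.le
  rw [e1, e2, e3] at step1
  have e4 : (M ^ p⁻¹ * r) ^ p = M * r ^ p := by
    rw [Real.mul_rpow (by positivity) hr.le, hαp]
  rw [e4]
  have hfM : (1 + μ) ^ p * G - H * (1 - μ) ^ p ≤ M := le_max_left _ _
  have hrp : (0:ℝ) < r ^ p := Real.rpow_pos_of_pos hr _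
  have expand : (1 - t) * ((1 + μ) ^ p * r ^ p) + t * (l ^ p * ((1 + μ) ^ p * r ^ p))
      - k / 8 * ((1 - μ) ^ p * r ^ p) * pucS p n
      = ((1 + μ) ^ p * G - H * (1 - μ) ^ p) * r ^ p := by
    rw [hGdef, hHdef]; ring
  rw [expand] at step1
  calc dist z' (m n) ^ p ≤ ((1 + μ) ^ p * G - H * (1 - μ) ^ p) * r ^ p := step1
    _ ≤ M * r ^ p := mul_le_mul_of_nonneg_right hfM hrp.le
end

section
/- Let X be a complete p-uniformly convex metric space with parameter k > 0, let (x_n) be a bounded sequence in X, and define φ : X → ℝ by φ(x) = limsup_{n → ∞} d(x, x_n). Let K be a nonempty closed convex subset of X. Then there exists a unique point u ∈ K such that φ(u) = inf_{x ∈ K} φ(x). -/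
/-!
Write `φ` for the asymptotic radius `x ↦ limsup_n d(x, xₙ)`. Passing to the limsup in the
`p`-uniform convexity inequality for `d(xₙ, ·)` shows that `ψ = φ ^ p` satisfies the same
inequality: `ψ m ≤ ψ x / 2 + ψ y / 2 - (k/8) d(x,y)^p` at midpoints. Hence if
`ψ x, ψ y ≤ inf_K ψ + ε` with `x, y ∈ K`, the midpoint lies in `K` and `(k/8) d(x,y)^p ≤ ε`. The sublevel sets
`{x ∈ K | ψ x ≤ inf_K ψ + ε}` are therefore closed, nonempty, and of diameter tending to `0`, so
Cantor's intersection theorem yields a minimiser; the case `ε = 0` gives its uniqueness.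
-/

open Filter Topology Set Metric

theorem rpow_limsup_le_of_eventually_rpow_le {ι : Type*} {l : Filter ι} [l.NeBot] {u : ι → ℝ}
    (hu : ∀ i, 0 ≤ u i) {p A : ℝ} (hp : 0 < p) (h : ∀ᶠ i in l, u i ^ p ≤ A) :
    limsup u l ^ p ≤ A := by
  have hA : 0 ≤ A := let ⟨i, hi⟩ := h.exists; (Real.rpow_nonneg (hu i) p).trans hi
  have hle : ∀ᶠ i in l, u i ≤ A ^ p⁻¹ :=
    h.mono fun i hi => (Real.le_rpow_inv_iff_of_pos (hu i) hA hp).2 hi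
  have hlim : 0 ≤ limsup u l :=
    le_limsup_of_frequently_le (Frequently.of_forall hu) (isBoundedUnder_of_eventually_le hle)
  exact (Real.le_rpow_inv_iff_of_pos hlim hA hp).1
    (limsup_le_of_le (isCoboundedUnder_le_of_le l hu) hle)

theorem isMinOn_rpow_iff {α : Type*} {f : α → ℝ} {s : Set α} {u : α} {p : ℝ}
    (hf : ∀ x, 0 ≤ f x) (hp : 0 < p) : IsMinOn (fun x => f x ^ p) s u ↔ IsMinOn f s u := by
  simp only [isMinOn_iff, Real.rpow_le_rpow_iff (hf _) (hf _) hp]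

theorem isMinOn_iff_eq_ciInf {α β : Type*} [ConditionallyCompleteLinearOrder β] {f : α → β}
    {s : Set α} {u : α} (hbdd : BddBelow (f '' s)) (hu : u ∈ s) :
    IsMinOn f s u ↔ f u = ⨅ x : s, f x := by
  rw [image_eq_range] at hbdd
  exact ⟨fun h => (h.iInf_eq hu).symm, fun h x hx => h ▸ ciInf_le hbdd ⟨x, hx⟩⟩

section UniformlyMidconvex

variable {X : Type*} [MetricSpace X]

/-- The midpoint inequality of `p`-uniform convexity, for `ψ` in place of `dist z` and with the
midpoint replaced by any point of `K`. -/
def UniformlyMidconvexOn (K : Set X) (ψ : X → ℝ) (c p : ℝ) : Prop :=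
  ∀ x ∈ K, ∀ y ∈ K, ∃ m ∈ K, ψ m ≤ 1 / 2 * ψ x + 1 / 2 * ψ y - c * dist x y ^ p

variable {K : Set X} {ψ : X → ℝ} {c p : ℝ}

theorem UniformlyMidconvexOn.dist_le_of_le_add (hψ : UniformlyMidconvexOn K ψ c p)
    (hc : 0 < c) (hp : 0 < p) {I ε : ℝ} (hI : ∀ z ∈ K, I ≤ ψ z) {x y : X} (hx : x ∈ K)
    (hy : y ∈ K) (hxε : ψ x ≤ I + ε) (hyε : ψ y ≤ I + ε) : dist x y ≤ (ε / c) ^ p⁻¹ := by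
  obtain ⟨m, hm, hψm⟩ := hψ x hx y hy
  have hd : c * dist x y ^ p ≤ ε := by linarith [hI m hm]
  have hd' : dist x y ^ p ≤ ε / c := by rwa [le_div_iff₀' hc]
  exact (Real.le_rpow_inv_iff_of_pos dist_nonneg ((by positivity : (0:ℝ) ≤ _).trans hd') hp).2 hd'

theorem UniformlyMidconvexOn.eq_of_isMinOn (hψ : UniformlyMidconvexOn K ψ c p)
    (hc : 0 < c) (hp : 0 < p) {u v : X} (hu : u ∈ K) (hv : v ∈ K) (hum : IsMinOn ψ K u)
    (hvm : IsMinOn ψ K v) : u = v := by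
  have h := hψ.dist_le_of_le_add hc hp (I := ψ u) (ε := 0) hum hu hv (by simp)
    (by simpa using hvm hu)
  rw [zero_div, Real.zero_rpow (inv_ne_zero hp.ne')] at h
  exact dist_le_zero.1 h

theorem UniformlyMidconvexOn.exists_isMinOn [CompleteSpace X] (hψ : UniformlyMidconvexOn K ψ c p)
    (hc : 0 < c) (hp : 0 < p) (hlsc : LowerSemicontinuous ψ) (hbdd : BddBelow (ψ '' K))
    (hK : K.Nonempty) (hKc : IsClosed K) : ∃ u ∈ K, IsMinOn ψ K u := by
  set I := sInf (ψ '' K)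
  have hI : ∀ z ∈ K, I ≤ ψ z := fun z hz => csInf_le hbdd (mem_image_of_mem ψ hz)
  set ε : ℕ → ℝ := fun n => 1 / (n + 1)
  have hε : Tendsto ε atTop (𝓝 0) := tendsto_one_div_add_atTop_nhds_zero_nat
  set s : ℕ → Set X := fun n => K ∩ ψ ⁻¹' Iic (I + ε n)
  have hs_anti : Antitone s := fun n N h =>
    inter_subset_inter_right K fun x (hx : ψ x ≤ I + ε N) => hx.trans (by dsimp only [ε]; gcongr)
  have hs_ne : ∀ n, (s n).Nonempty := fun n => by
    obtain ⟨_, ⟨x, hx, rfl⟩, hlt⟩ := exists_lt_of_csInf_lt (hK.image ψ)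
      (lt_add_of_pos_right I (by positivity : 0 < ε n))
    exact ⟨x, hx, hlt.le⟩
  have hs_dist : ∀ n, ∀ x ∈ s n, ∀ y ∈ s n, dist x y ≤ (ε n / c) ^ p⁻¹ :=
    fun n x hx y hy => hψ.dist_le_of_le_add hc hp hI hx.1 hy.1 hx.2 hy.2
  have hdiam : Tendsto (fun n => diam (s n)) atTop (𝓝 0) := by
    have hb : Tendsto (fun n => (ε n / c) ^ p⁻¹) atTop (𝓝 0) := by
      simpa [Real.zero_rpow (inv_ne_zero hp.ne')] using
        (hε.div_const c).rpow_const (Or.inr (inv_nonneg.2 hp.le))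
    exact squeeze_zero (fun n => diam_nonneg)
      (fun n => diam_le_of_forall_dist_le (by positivity) (hs_dist n)) hb
  obtain ⟨u, hu⟩ := nonempty_iInter_of_nonempty_biInter
    (fun n => hKc.inter (hlsc.isClosed_preimage _))
    (fun n => isBounded_iff.2 ⟨_, fun x hx y hy => hs_dist n x hx y hy⟩)
    (fun N => (hs_ne N).mono (subset_iInter₂ fun n hn => hs_anti hn)) hdiam
  rw [mem_iInter] at hu
  have huI : ψ u ≤ I := by
    simpa using ge_of_tendsto (tendsto_const_nhds.add hε) (Eventually.of_forall fun n => (hu n).2)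
  exact ⟨u, (hu 0).1, fun z hz => huI.trans (hI z hz)⟩

theorem UniformlyMidconvexOn.existsUnique_isMinOn [CompleteSpace X]
    (hψ : UniformlyMidconvexOn K ψ c p) (hc : 0 < c) (hp : 0 < p) (hlsc : LowerSemicontinuous ψ)
    (hbdd : BddBelow (ψ '' K)) (hK : K.Nonempty) (hKc : IsClosed K) :
    ∃! u, u ∈ K ∧ IsMinOn ψ K u := by
  obtain ⟨u, hu, hum⟩ := hψ.exists_isMinOn hc hp hlsc hbdd hK hKc
  exact ⟨u, ⟨hu, hum⟩, fun v ⟨hv, hvm⟩ => hψ.eq_of_isMinOn hc hp hv hu hvm hum⟩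

end UniformlyMidconvex

section AsymptoticRadius

variable {X : Type*} [PseudoMetricSpace X]

noncomputable def asymptoticRadius (xn : ℕ → X) (x : X) : ℝ :=
  limsup (fun n => dist x (xn n)) atTop

variable {xn : ℕ → X}

theorem isBoundedUnder_le_dist_s5 (hxn : Bornology.IsBounded (range xn)) (x : X) :
    IsBoundedUnder (· ≤ ·) atTop fun n => dist x (xn n) := by
  obtain ⟨r, hr⟩ := hxn.subset_closedBall x
  exact isBoundedUnder_of ⟨r, fun n => (dist_comm x _).trans_le (hr (mem_range_self n))⟩

theorem isCoboundedUnder_le_dist_s5 (xn : ℕ → X) (x : X) :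
    IsCoboundedUnder (· ≤ ·) atTop fun n => dist x (xn n) :=
  isCoboundedUnder_le_of_le atTop fun _ => dist_nonneg

theorem asymptoticRadius_nonneg (hxn : Bornology.IsBounded (range xn)) (x : X) :
    0 ≤ asymptoticRadius xn x :=
  le_limsup_of_frequently_le (Frequently.of_forall fun _ => dist_nonneg)
    (isBoundedUnder_le_dist_s5 hxn x)

theorem lipschitzWith_asymptoticRadius (hxn : Bornology.IsBounded (range xn)) :
    LipschitzWith 1 (asymptoticRadius xn) := by
  refine LipschitzWith.of_le_add fun x y => ?_
  calc asymptoticRadius xn x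
      ≤ limsup (fun n => dist x y + dist y (xn n)) atTop :=
        limsup_le_limsup (Eventually.of_forall fun n => dist_triangle x y (xn n))
          (isCoboundedUnder_le_dist_s5 xn x)
          (isBoundedUnder_le_add isBoundedUnder_const (isBoundedUnder_le_dist_s5 hxn y))
    _ = asymptoticRadius xn y + dist x y :=
        (limsup_const_add atTop _ _ (isBoundedUnder_le_dist_s5 hxn y)
          (isCoboundedUnder_le_dist_s5 xn y)).trans (add_comm _ _)

theorem asymptoticRadius_rpow_le (hxn : Bornology.IsBounded (range xn)) {p c : ℝ} (hp : 0 < p)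
    {x y m : X}
    (h : ∀ z, dist z m ^ p ≤ 1 / 2 * dist z x ^ p + 1 / 2 * dist z y ^ p - c) :
    asymptoticRadius xn m ^ p ≤
      1 / 2 * asymptoticRadius xn x ^ p + 1 / 2 * asymptoticRadius xn y ^ p - c := by
  set F : ℝ → ℝ := fun ε =>
    1 / 2 * (asymptoticRadius xn x + ε) ^ p + 1 / 2 * (asymptoticRadius xn y + ε) ^ p - c
  have hF : Continuous F := by dsimp only [F]; fun_prop (disch := exact hp.le)
  have hlt : ∀ z, ∀ ε > 0, ∀ᶠ n in atTop, dist (xn n) z < asymptoticRadius xn z + ε :=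
    fun z ε hε => (eventually_lt_of_limsup_lt (lt_add_of_pos_right _ hε)
      (isBoundedUnder_le_dist_s5 hxn z)).mono fun n hn => (dist_comm _ _).trans_lt hn
  have key : ∀ ε > 0, asymptoticRadius xn m ^ p ≤ F ε := fun ε hε => by
    refine rpow_limsup_le_of_eventually_rpow_le (fun _ => dist_nonneg) hp ?_
    filter_upwards [hlt x ε hε, hlt y ε hε] with n hx hy
    rw [dist_comm]
    refine (h (xn n)).trans ?_
    dsimp only [F]
    gcongr
  simpa [F] using ge_of_tendsto (hF.tendsto 0 |>.mono_left nhdsWithin_le_nhds)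
    (eventually_nhdsWithin_of_forall (s := Ioi 0) key)

end AsymptoticRadius

/-- In a complete `p`-uniformly convex space, the asymptotic-radius function
`φ x = limsup_n dist x (x_n)` of a bounded sequence attains its infimum over a
nonempty closed convex set `K` at a unique point of `K`. -/
theorem asymptotic_center_exists_unique
    {X : Type*} [MetricSpace X] [CompleteSpace X]
    (p k : ℝ) (hp : 1 ≤ p) (hk : 0 < k)
    (geo : ∀ x y : X, ∃ m : X, dist x m = dist x y / 2 ∧ dist m y = dist x y / 2)
    (puc : ∀ x y z m : X,
      dist x m = dist x y / 2 → dist m y = dist x y / 2 →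
      dist z m ^ p ≤ (1 / 2) * dist z x ^ p + (1 / 2) * dist z y ^ p
        - (k / 8) * dist x y ^ p)
    (xn : ℕ → X) (hxn : Bornology.IsBounded (Set.range xn))
    (K : Set X) (hK : K.Nonempty) (hKc : IsClosed K)
    (hKconv : ∀ x ∈ K, ∀ y ∈ K, ∀ m : X,
      dist x m = dist x y / 2 → dist m y = dist x y / 2 → m ∈ K) :
    ∃! u : X, u ∈ K ∧
      Filter.limsup (fun n => dist u (xn n)) Filter.atTop
        = ⨅ x : K, Filter.limsup (fun n => dist (x : X) (xn n)) Filter.atTop := by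
  have hp0 : 0 < p := by linarith
  have hφ : ∀ x, 0 ≤ asymptoticRadius xn x := asymptoticRadius_nonneg hxn
  have hmid : UniformlyMidconvexOn K (fun x => asymptoticRadius xn x ^ p) (k / 8) p := by
    intro x hx y hy
    obtain ⟨m, hxm, hmy⟩ := geo x y
    exact ⟨m, hKconv x hx y hy m hxm hmy,
      asymptoticRadius_rpow_le hxn hp0 fun z => puc x y z m hxm hmy⟩
  have hlsc : LowerSemicontinuous fun x => asymptoticRadius xn x ^ p :=
    ((lipschitzWith_asymptoticRadius hxn).continuous.rpow_const
      fun _ => Or.inr hp0.le).lowerSemicontinuous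
  have hbdd : BddBelow (asymptoticRadius xn '' K) :=
    ⟨0, forall_mem_image.2 fun x _ => hφ x⟩
  refine (existsUnique_congr fun u => and_congr_right fun hu => ?_).1
    (hmid.existsUnique_isMinOn (by positivity) hp0 hlsc
      ⟨0, forall_mem_image.2 fun x _ => Real.rpow_nonneg (hφ x) p⟩ hK hKc)
  rw [isMinOn_rpow_iff hφ hp0, isMinOn_iff_eq_ciInf hbdd hu]
  rfl
end

section
/- Let X be a 2-uniformly convex metric space with parameter k > 0, let K be a nonempty bounded convex subset of X with diam(K) = D > 0, and let T : K → X be nonexpansive (d(T x, T y) ≤ d(x,y) for all x, y ∈ K). Then for all x, y ∈ K, any midpoint m of x and y, and any midpoint m' of T x and T y, one has d(m', T m)^2 ≤ (2D/k)·(d(x,y) − d(T x, T y)). Consequently T is of type Γ with γ(t) = (k/(2D))·t^2. -/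
/-!
Let `r = d(m', T m)`. Take a midpoint `n` of `T m` and `m'`. Uniform convexity, applied with
`T x` and with `T y` as the outer point, bounds `d(T x, n)² + d(T y, n)²` by a quantity that
drops by `k r² / 4`; since `d(T x, T y)² ≤ 2 (d(T x, n)² + d(T y, n)²)` and `T m` lies within
`d(x, y) / 2` of both `T x` and `T y`, this gives `k r² ≤ d(x, y)² - d(T x, T y)²`, and the
factor `d(x, y) + d(T x, T y) ≤ 2 D` turns this into the linear bound.
-/

theorem mul_dist_sq_midpoint_le {X : Type*} [MetricSpace X] {k : ℝ}
    (geo : ∀ x y : X, ∃ m : X, dist x m = dist x y / 2 ∧ dist m y = dist x y / 2)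
    (puc : ∀ x y z m : X,
      dist x m = dist x y / 2 → dist m y = dist x y / 2 →
      dist z m ^ 2 ≤ (1 / 2) * dist z x ^ 2 + (1 / 2) * dist z y ^ 2
        - (k / 8) * dist x y ^ 2)
    {u v m w : X} (hum : dist u m = dist u v / 2) (hmv : dist m v = dist u v / 2) :
    k * dist w m ^ 2 ≤ 2 * (dist u w ^ 2 + dist v w ^ 2) - dist u v ^ 2 := by
  obtain ⟨n, hwn, hnm⟩ := geo w m
  have hu := puc w m u n hwn hnm
  have hv := puc w m v n hwn hnm
  rw [hum] at hu
  rw [dist_comm v m, hmv] at hv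
  have hsplit : dist u v ^ 2 ≤ 2 * (dist u n ^ 2 + dist v n ^ 2) := by
    have htri : dist u v ≤ dist u n + dist v n := dist_comm n v ▸ dist_triangle u n v
    nlinarith [dist_nonneg (x := u) (y := v), sq_nonneg (dist u n - dist v n)]
  linarith

theorem nonexpansive_is_type_Gamma_general
    {X : Type*} [MetricSpace X]
    (k : ℝ) (hk : 0 < k)
    (geo : ∀ x y : X, ∃ m : X, dist x m = dist x y / 2 ∧ dist m y = dist x y / 2)
    (puc : ∀ x y z m : X,
      dist x m = dist x y / 2 → dist m y = dist x y / 2 →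
      dist z m ^ 2 ≤ (1 / 2) * dist z x ^ 2 + (1 / 2) * dist z y ^ 2
        - (k / 8) * dist x y ^ 2)
    (K : Set X) (hKb : Bornology.IsBounded K)
    (hKconv : ∀ x ∈ K, ∀ y ∈ K, ∀ m : X,
      dist x m = dist x y / 2 → dist m y = dist x y / 2 → m ∈ K)
    (D : ℝ) (hD : Metric.diam K = D) (hD0 : 0 < D)
    (T : X → X)
    (hT : ∀ x ∈ K, ∀ y ∈ K, dist (T x) (T y) ≤ dist x y) :
    ∀ x ∈ K, ∀ y ∈ K, ∀ m m' : X,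
      dist x m = dist x y / 2 → dist m y = dist x y / 2 →
      dist (T x) m' = dist (T x) (T y) / 2 → dist m' (T y) = dist (T x) (T y) / 2 →
      dist m' (T m) ^ 2 ≤ (2 * D / k) * (dist x y - dist (T x) (T y)) ∧
        (k / (2 * D)) * dist m' (T m) ^ 2 ≤ |dist x y - dist (T x) (T y)| := by
  intro x hx y hy m m' hxm hmy hxm' hm'y
  have hm : m ∈ K := hKconv x hx y hy m hxm hmy
  have hxTm : dist (T x) (T m) ≤ dist x y / 2 := hxm ▸ hT x hx m hm
  have hyTm : dist (T y) (T m) ≤ dist x y / 2 := dist_comm (T m) (T y) ▸ hmy ▸ hT m hm y hy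
  have hTxy : dist (T x) (T y) ≤ dist x y := hT x hx y hy
  have hxy : dist x y ≤ D := hD ▸ Metric.dist_le_diam_of_mem hKb hx hy
  have hsq : k * dist m' (T m) ^ 2 ≤ dist x y ^ 2 - dist (T x) (T y) ^ 2 := by
    rw [dist_comm m']
    refine (mul_dist_sq_midpoint_le geo puc hxm' hm'y).trans ?_
    nlinarith [dist_nonneg (x := T x) (y := T m), dist_nonneg (x := T y) (y := T m)]
  have hlin : k * dist m' (T m) ^ 2 ≤ 2 * D * (dist x y - dist (T x) (T y)) := by
    nlinarith [dist_nonneg (x := T x) (y := T y)]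
  constructor
  · rw [div_mul_eq_mul_div, le_div_iff₀ hk]
    linarith
  · rw [abs_of_nonneg (by linarith), div_mul_eq_mul_div, div_le_iff₀ (by positivity)]
    linarith

/-- In a `2`-uniformly convex space with parameter `k > 0`, a nonexpansive map `T` on a
nonempty bounded convex set `K` with `diam K = D > 0` satisfies
`dist m' (T m) ^ 2 ≤ (2 D / k) * (dist x y - dist (T x) (T y))` for all `x, y ∈ K`,
`m` a midpoint of `x, y` and `m'` a midpoint of `T x, T y`; consequently `T` is of
type `Γ` with `γ t = (k / (2 D)) * t ^ 2`. -/
theorem nonexpansive_is_type_Gamma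
    {X : Type*} [MetricSpace X]
    (k : ℝ) (hk : 0 < k)
    (geo : ∀ x y : X, ∃ m : X, dist x m = dist x y / 2 ∧ dist m y = dist x y / 2)
    (puc : ∀ x y z m : X,
      dist x m = dist x y / 2 → dist m y = dist x y / 2 →
      dist z m ^ 2 ≤ (1 / 2) * dist z x ^ 2 + (1 / 2) * dist z y ^ 2
        - (k / 8) * dist x y ^ 2)
    (K : Set X) (hK : K.Nonempty) (hKb : Bornology.IsBounded K)
    (hKconv : ∀ x ∈ K, ∀ y ∈ K, ∀ m : X,
      dist x m = dist x y / 2 → dist m y = dist x y / 2 → m ∈ K)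
    (D : ℝ) (hD : Metric.diam K = D) (hD0 : 0 < D)
    (T : X → X)
    (hT : ∀ x ∈ K, ∀ y ∈ K, dist (T x) (T y) ≤ dist x y) :
    ∀ x ∈ K, ∀ y ∈ K, ∀ m m' : X,
      dist x m = dist x y / 2 → dist m y = dist x y / 2 →
      dist (T x) m' = dist (T x) (T y) / 2 → dist m' (T y) = dist (T x) (T y) / 2 →
      dist m' (T m) ^ 2 ≤ (2 * D / k) * (dist x y - dist (T x) (T y)) ∧
        (k / (2 * D)) * dist m' (T m) ^ 2 ≤ |dist x y - dist (T x) (T y)| :=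
  nonexpansive_is_type_Gamma_general k hk geo puc K hKb hKconv D hD hD0 T hT
end

section
/- Let X be a 2-uniformly convex metric space with parameter k > 0. Let x, y, x', y' ∈ X, let m be a midpoint of x and y, let m' be a midpoint of x' and y', and suppose all pairwise distances among the six points x, y, x', y', m, m' are at most D > 0. Then d(m, m')^2 ≤ (4D/k)·(d(x, x') + d(y, y')). -/
set_option maxHeartbeats 1000000 in
/-- In a `2`-uniformly convex space with parameter `k > 0`, if `m` is a midpoint of
`x, y`, `m'` is a midpoint of `x', y'`, and all pairwise distances among the six
points are at most `D > 0`, then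
`dist m m' ^ 2 ≤ (4 D / k) * (dist x x' + dist y y')`. -/
theorem midpoint_distance_estimate
    {X : Type*} [MetricSpace X]
    (k : ℝ) (hk : 0 < k)
    (geo : ∀ x y : X, ∃ m : X, dist x m = dist x y / 2 ∧ dist m y = dist x y / 2)
    (puc : ∀ x y z m : X,
      dist x m = dist x y / 2 → dist m y = dist x y / 2 →
      dist z m ^ 2 ≤ (1 / 2) * dist z x ^ 2 + (1 / 2) * dist z y ^ 2
        - (k / 8) * dist x y ^ 2)
    (x y x' y' m m' : X)
    (hm1 : dist x m = dist x y / 2) (hm2 : dist m y = dist x y / 2)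
    (hm1' : dist x' m' = dist x' y' / 2) (hm2' : dist m' y' = dist x' y' / 2)
    (D : ℝ) (hD0 : 0 < D)
    (hbdd : ∀ a ∈ ({x, y, x', y', m, m'} : Set X),
      ∀ b ∈ ({x, y, x', y', m, m'} : Set X), dist a b ≤ D) :
    dist m m' ^ 2 ≤ (4 * D / k) * (dist x x' + dist y y') := by
  obtain ⟨n, hn1, hn2⟩ := geo m m'
  have hx := puc m m' x n hn1 hn2
  have hy := puc m m' y n hn1 hn2
  have hx' := puc m m' x' n hn1 hn2
  have hy' := puc m m' y' n hn1 hn2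
  set d := dist x y with hd
  set d' := dist x' y' with hd'
  set a := dist x x' with ha
  set b := dist y y' with hb
  set r := dist m m' with hr
  clear_value d d' a b r
  clear geo puc
  -- triangle bounds on distances to the opposite midpoint
  have t1 : dist x m' ≤ a + d' / 2 := by
    calc dist x m' ≤ dist x x' + dist x' m' := dist_triangle _ _ _
    _ = a + d' / 2 := by rw [hm1', ha]
  have t2 : dist y m' ≤ b + d' / 2 := by
    calc dist y m' ≤ dist y y' + dist y' m' := dist_triangle _ _ _
    _ = b + d' / 2 := by rw [dist_comm y' m', hm2', hb]
  have t3 : dist x' m ≤ a + d / 2 := by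
    calc dist x' m ≤ dist x' x + dist x m := dist_triangle _ _ _
    _ = a + d / 2 := by rw [dist_comm x' x, hm1, ha]
  have t4 : dist y' m ≤ b + d / 2 := by
    calc dist y' m ≤ dist y' y + dist y m := dist_triangle _ _ _
    _ = b + d / 2 := by rw [dist_comm y' y, dist_comm y m, hm2, hb]
  have t1sq : dist x m' ^ 2 ≤ (a + d' / 2) ^ 2 := pow_le_pow_left₀ dist_nonneg t1 2
  have t2sq : dist y m' ^ 2 ≤ (b + d' / 2) ^ 2 := pow_le_pow_left₀ dist_nonneg t2 2
  have t3sq : dist x' m ^ 2 ≤ (a + d / 2) ^ 2 := pow_le_pow_left₀ dist_nonneg t3 2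
  have t4sq : dist y' m ^ 2 ≤ (b + d / 2) ^ 2 := pow_le_pow_left₀ dist_nonneg t4 2
  have hxm : dist x m = d / 2 := hm1
  have hym : dist y m = d / 2 := by rw [dist_comm, hm2]
  have hx'm' : dist x' m' = d' / 2 := hm1'
  have hy'm' : dist y' m' = d' / 2 := by rw [dist_comm y' m', hm2']
  rw [hxm] at hx
  rw [hym] at hy
  rw [hx'm'] at hx'
  rw [hy'm'] at hy'
  have I1 : dist x n ^ 2 ≤ (1/2) * (d/2)^2 + (1/2) * (a + d'/2)^2 - (k/8) * r^2 := by
    linarith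
  have I2 : dist y n ^ 2 ≤ (1/2) * (d/2)^2 + (1/2) * (b + d'/2)^2 - (k/8) * r^2 := by
    linarith
  have I3 : dist x' n ^ 2 ≤ (1/2) * (a + d/2)^2 + (1/2) * (d'/2)^2 - (k/8) * r^2 := by
    linarith
  have I4 : dist y' n ^ 2 ≤ (1/2) * (b + d/2)^2 + (1/2) * (d'/2)^2 - (k/8) * r^2 := by
    linarith
  -- triangle inequalities through n
  have T1 : d ≤ dist x n + dist y n := by
    calc d = dist x y := hd
    _ ≤ dist x n + dist n y := dist_triangle _ _ _
    _ = dist x n + dist y n := by rw [dist_comm n y]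
  have T2 : d' ≤ dist x' n + dist y' n := by
    calc d' = dist x' y' := hd'
    _ ≤ dist x' n + dist n y' := dist_triangle _ _ _
    _ = dist x' n + dist y' n := by rw [dist_comm n y']
  have hd0 : (0:ℝ) ≤ d := by rw [hd]; exact dist_nonneg
  have hd'0 : (0:ℝ) ≤ d' := by rw [hd']; exact dist_nonneg
  have S1 : d ^ 2 ≤ 2 * dist x n ^ 2 + 2 * dist y n ^ 2 := by
    have h1 := pow_le_pow_left₀ hd0 T1 2
    linarith [sq_nonneg (dist x n - dist y n), h1]
  have S2 : d' ^ 2 ≤ 2 * dist x' n ^ 2 + 2 * dist y' n ^ 2 := by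
    have h1 := pow_le_pow_left₀ hd'0 T2 2
    linarith [sq_nonneg (dist x' n - dist y' n), h1]
  have hdD : d ≤ D := by rw [hd]; exact hbdd x (by simp) y (by simp)
  have hd'D : d' ≤ D := by rw [hd']; exact hbdd x' (by simp) y' (by simp)
  have haD : a ≤ D := by rw [ha]; exact hbdd x (by simp) x' (by simp)
  have hbD : b ≤ D := by rw [hb]; exact hbdd y (by simp) y' (by simp)
  have ha0 : (0:ℝ) ≤ a := by rw [ha]; exact dist_nonneg
  have hb0 : (0:ℝ) ≤ b := by rw [hb]; exact dist_nonneg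
  have step : k * r ^ 2 ≤ 2 * a ^ 2 + 2 * b ^ 2 + (a + b) * (d + d') := by
    linarith [I1, I2, I3, I4, S1, S2]
  have p1 : (0:ℝ) ≤ a * (D - a) := mul_nonneg ha0 (by linarith)
  have p2 : (0:ℝ) ≤ b * (D - b) := mul_nonneg hb0 (by linarith)
  have p3 : (0:ℝ) ≤ (a + b) * (2 * D - d - d') :=
    mul_nonneg (add_nonneg ha0 hb0) (by linarith)
  have key : k * r ^ 2 ≤ 4 * D * (a + b) := by linarith [step, p1, p2, p3]
  rw [div_mul_eq_mul_div, le_div_iff₀ hk]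
  linarith [key]
end

section
/- Let X be a 2-uniformly convex metric space with parameter k > 0, let K be a nonempty bounded closed convex subset of X with diam(K) = D > 0, and let T : K → K be of type Γ with function γ. Then T is α-almost convex; indeed one may take α(t) = sqrt((8D/k)·t) + γ^{-1}(2t): for all x, y ∈ K and any midpoint m of x and y, d(m, T m) ≤ α(max{d(x, T x), d(y, T y)}). -/
set_option maxHeartbeats 1000000 in
private lemma almost_convex_aux (k D M Jx Jy a b d p q Xm Ym u1 u2 v1 v2 : ℝ)
    (h1 : u1 ^ 2 ≤ (1 / 2) * (a / 2) ^ 2 + (1 / 2) * p ^ 2 - (k / 8) * d ^ 2)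
    (h2 : u2 ^ 2 ≤ (1 / 2) * (a / 2) ^ 2 + (1 / 2) * q ^ 2 - (k / 8) * d ^ 2)
    (h3 : v1 ^ 2 ≤ (1 / 2) * Xm ^ 2 + (1 / 2) * (b / 2) ^ 2 - (k / 8) * d ^ 2)
    (h4 : v2 ^ 2 ≤ (1 / 2) * Ym ^ 2 + (1 / 2) * (b / 2) ^ 2 - (k / 8) * d ^ 2)
    (hp2 : p ^ 2 ≤ (Jx + b / 2) ^ 2) (hq2 : q ^ 2 ≤ (Jy + b / 2) ^ 2)
    (hX2 : Xm ^ 2 ≤ (Jx + a / 2) ^ 2) (hY2 : Ym ^ 2 ≤ (Jy + a / 2) ^ 2)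
    (haw : a ≤ u1 + u2) (hbw : b ≤ v1 + v2) (ha0 : 0 ≤ a) (hb0 : 0 ≤ b)
    (hprod : (a + b) * (Jx + Jy) ≤ (2 * D) * (2 * M))
    (hJx2 : Jx ^ 2 ≤ D * M) (hJy2 : Jy ^ 2 ≤ D * M) :
    k * d ^ 2 ≤ 8 * D * M := by
  have hu0 : 0 ≤ u1 + u2 := le_trans ha0 haw
  have hv0 : 0 ≤ v1 + v2 := le_trans hb0 hbw
  have e1 : a * a ≤ (u1 + u2) * (u1 + u2) := mul_le_mul haw haw ha0 hu0
  have e2 : b * b ≤ (v1 + v2) * (v1 + v2) := mul_le_mul hbw hbw hb0 hv0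
  have e1' : a ^ 2 ≤ 2 * u1 ^ 2 + 2 * u2 ^ 2 := by nlinarith [sq_nonneg (u1 - u2)]
  have e2' : b ^ 2 ≤ 2 * v1 ^ 2 + 2 * v2 ^ 2 := by nlinarith [sq_nonneg (v1 - v2)]
  linarith [h1, h2, h3, h4, hp2, hq2, hX2, hY2, e1', e2', hprod, hJx2, hJy2]


set_option maxHeartbeats 1000000

/-- In a `2`-uniformly convex space with parameter `k > 0`, a self-map `T` of a
nonempty bounded closed convex set `K` with `diam K = D > 0` that is of type `Γ` with
function `γ` is `α`-almost convex with `α t = Real.sqrt ((8 D / k) * t) + γ⁻¹ (2 t)`: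
for all `x, y ∈ K` and any midpoint `m` of `x` and `y`,
`dist m (T m) ≤ Real.sqrt ((8 D / k) * max (dist x (T x)) (dist y (T y))) + γ⁻¹ (2 * max ...)`.
The inverse `γ⁻¹` is expressed via: for every `s ≥ 0` with
`2 * max (dist x (T x)) (dist y (T y)) ≤ γ s` (i.e. `γ⁻¹(2 max ...) ≤ s`), the bound
`dist m (T m) ≤ Real.sqrt (...) + s` holds. -/
theorem type_Gamma_is_almost_convex
    {X : Type*} [MetricSpace X]
    (k : ℝ) (hk : 0 < k)
    (geo : ∀ x y : X, ∃ m : X, dist x m = dist x y / 2 ∧ dist m y = dist x y / 2)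
    (puc : ∀ x y z m : X,
      dist x m = dist x y / 2 → dist m y = dist x y / 2 →
      dist z m ^ 2 ≤ (1 / 2) * dist z x ^ 2 + (1 / 2) * dist z y ^ 2
        - (k / 8) * dist x y ^ 2)
    (K : Set X) (hK : K.Nonempty) (hKb : Bornology.IsBounded K) (hKcl : IsClosed K)
    (hKconv : ∀ x ∈ K, ∀ y ∈ K, ∀ m : X,
      dist x m = dist x y / 2 → dist m y = dist x y / 2 → m ∈ K)
    (D : ℝ) (hD : Metric.diam K = D) (hD0 : 0 < D)
    (T : X → X) (hTK : ∀ x ∈ K, T x ∈ K)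
    (γ : ℝ → ℝ)
    (hγcont : ContinuousOn γ (Set.Ici 0))
    (hγmono : StrictMonoOn γ (Set.Ici 0))
    (hγconv : ConvexOn ℝ (Set.Ici 0) γ)
    (hγ0 : γ 0 = 0)
    (hΓ : ∀ x ∈ K, ∀ y ∈ K, ∀ m m' : X,
      dist x m = dist x y / 2 → dist m y = dist x y / 2 →
      dist (T x) m' = dist (T x) (T y) / 2 → dist m' (T y) = dist (T x) (T y) / 2 →
      γ (dist m' (T m)) ≤ |dist x y - dist (T x) (T y)|) :
    ∀ x ∈ K, ∀ y ∈ K, ∀ m : X,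
      dist x m = dist x y / 2 → dist m y = dist x y / 2 →
      ∀ s : ℝ, 0 ≤ s →
        2 * max (dist x (T x)) (dist y (T y)) ≤ γ s →
        dist m (T m) ≤
          Real.sqrt ((8 * D / k) * max (dist x (T x)) (dist y (T y))) + s := by

  intro x hx y hy m hm1 hm2 s hs hsg
  obtain ⟨m', hm'1, hm'2⟩ := geo (T x) (T y)
  obtain ⟨w, hw1, hw2⟩ := geo m m'
  have hTx : T x ∈ K := hTK x hx
  have hTy : T y ∈ K := hTK y hy
  set Jx := dist x (T x) with hJxdef
  set Jy := dist y (T y) with hJydef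
  set M := max Jx Jy with hMdef
  have hJx0 : (0:ℝ) ≤ Jx := dist_nonneg
  have hJy0 : (0:ℝ) ≤ Jy := dist_nonneg
  have hJxM : Jx ≤ M := le_max_left _ _
  have hJyM : Jy ≤ M := le_max_right _ _
  have hM0 : (0:ℝ) ≤ M := le_trans hJx0 hJxM
  have hJxD : Jx ≤ D := hD ▸ Metric.dist_le_diam_of_mem hKb hx hTx
  have hJyD : Jy ≤ D := hD ▸ Metric.dist_le_diam_of_mem hKb hy hTy
  have haD : dist x y ≤ D := hD ▸ Metric.dist_le_diam_of_mem hKb hx hy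
  have hbD : dist (T x) (T y) ≤ D := hD ▸ Metric.dist_le_diam_of_mem hKb hTx hTy
  -- Step 1: dist m' (T m) ≤ s, via the Γ-condition and strict monotonicity of γ
  have habs : |dist x y - dist (T x) (T y)| ≤ 2 * M := by
    rw [abs_le]
    constructor
    · have h := dist_triangle4 (T x) x y (T y)
      rw [dist_comm (T x) x] at h
      linarith
    · have h := dist_triangle4 x (T x) (T y) y
      rw [dist_comm (T y) y] at h
      linarith
  have hm'Tm : dist m' (T m) ≤ s := by
    by_contra hcon
    push_neg at hcon
    have h1 := hγmono (Set.mem_Ici.2 hs) (Set.mem_Ici.2 dist_nonneg) hcon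
    have h2 := hΓ x hx y hy m m' hm1 hm2 hm'1 hm'2
    linarith
  -- Step 2: k * dist m m' ^ 2 ≤ 8 * D * M
  have h1 := puc m m' x w hw1 hw2
  have h2 := puc m m' y w hw1 hw2
  have h3 := puc m m' (T x) w hw1 hw2
  have h4 := puc m m' (T y) w hw1 hw2
  rw [hm1] at h1
  have hym : dist y m = dist x y / 2 := by rw [dist_comm]; exact hm2
  rw [hym] at h2
  rw [hm'1] at h3
  have hym' : dist (T y) m' = dist (T x) (T y) / 2 := by rw [dist_comm]; exact hm'2
  rw [hym'] at h4
  -- triangle bounds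
  have hp : dist x m' ≤ Jx + dist (T x) (T y) / 2 := by
    have h := dist_triangle x (T x) m'
    rw [hm'1] at h
    linarith
  have hq : dist y m' ≤ Jy + dist (T x) (T y) / 2 := by
    have h := dist_triangle y (T y) m'
    rw [hym'] at h
    linarith
  have hX : dist (T x) m ≤ Jx + dist x y / 2 := by
    have h := dist_triangle (T x) x m
    rw [dist_comm (T x) x, hm1] at h
    linarith
  have hY : dist (T y) m ≤ Jy + dist x y / 2 := by
    have h := dist_triangle (T y) y m
    rw [dist_comm (T y) y, hym] at h
    linarith
  have hp2 : dist x m' ^ 2 ≤ (Jx + dist (T x) (T y) / 2) ^ 2 :=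
    pow_le_pow_left₀ dist_nonneg hp 2
  have hq2 : dist y m' ^ 2 ≤ (Jy + dist (T x) (T y) / 2) ^ 2 :=
    pow_le_pow_left₀ dist_nonneg hq 2
  have hX2 : dist (T x) m ^ 2 ≤ (Jx + dist x y / 2) ^ 2 :=
    pow_le_pow_left₀ dist_nonneg hX 2
  have hY2 : dist (T y) m ^ 2 ≤ (Jy + dist x y / 2) ^ 2 :=
    pow_le_pow_left₀ dist_nonneg hY 2
  have haw : dist x y ≤ dist x w + dist y w := by
    have h := dist_triangle x w y
    rw [dist_comm w y] at h
    exact h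
  have hbw : dist (T x) (T y) ≤ dist (T x) w + dist (T y) w := by
    have h := dist_triangle (T x) w (T y)
    rw [dist_comm w (T y)] at h
    exact h
  have haw2 : dist x y ^ 2 ≤ (dist x w + dist y w) ^ 2 :=
    pow_le_pow_left₀ dist_nonneg haw 2
  have hbw2 : dist (T x) (T y) ^ 2 ≤ (dist (T x) w + dist (T y) w) ^ 2 :=
    pow_le_pow_left₀ dist_nonneg hbw 2
  have hab2D : dist x y + dist (T x) (T y) ≤ 2 * D := by linarith
  have hJJ2M : Jx + Jy ≤ 2 * M := by linarith
  have hJJ0 : (0:ℝ) ≤ Jx + Jy := by linarith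
  have h2D0 : (0:ℝ) ≤ 2 * D := by linarith
  have hprod : (dist x y + dist (T x) (T y)) * (Jx + Jy) ≤ (2 * D) * (2 * M) :=
    mul_le_mul hab2D hJJ2M hJJ0 h2D0
  have hJx2 : Jx ^ 2 ≤ D * M := by
    have h := mul_le_mul hJxD hJxM hJx0 hD0.le
    rw [pow_two]; linarith
  have hJy2 : Jy ^ 2 ≤ D * M := by
    have h := mul_le_mul hJyD hJyM hJy0 hD0.le
    rw [pow_two]; linarith
  have hkd : k * dist m m' ^ 2 ≤ 8 * D * M :=
    almost_convex_aux k D M Jx Jy (dist x y) (dist (T x) (T y)) (dist m m')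
      (dist x m') (dist y m') (dist (T x) m) (dist (T y) m)
      (dist x w) (dist y w) (dist (T x) w) (dist (T y) w)
      h1 h2 h3 h4 hp2 hq2 hX2 hY2 haw hbw dist_nonneg dist_nonneg hprod hJx2 hJy2
  have hd2 : dist m m' ^ 2 ≤ (8 * D / k) * M := by
    rw [div_mul_eq_mul_div, le_div_iff₀ hk]
    linarith
  have hsq : dist m m' ≤ Real.sqrt ((8 * D / k) * M) := by
    have h := Real.sqrt_le_sqrt hd2
    rwa [Real.sqrt_sq dist_nonneg] at h
  calc dist m (T m) ≤ dist m m' + dist m' (T m) := dist_triangle _ _ _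
    _ ≤ Real.sqrt ((8 * D / k) * M) + s := add_le_add hsq hm'Tm
end

section
/- Let X be a p-uniformly convex metric space with parameter k > 0 containing at least two distinct points. Then k ≤ 2^(3−p) and k ≤ 4 − 2^(3−p); in particular k ≤ 2. -/
/-!
Take distinct points `x, y` at distance `d` and a midpoint `m`. Testing the inequality at
`z = m` gives `k/8 · d^p ≤ (d/2)^p`, and at `z = x` gives `(d/2)^p ≤ (1/2 - k/8) · d^p`.
Since `8 · (d/2)^p = 2^(3-p) · d^p`, these are the two bounds; adding them gives `k ≤ 2`.
-/

lemma Real.two_rpow_three_sub_mul_rpow (p : ℝ) {d : ℝ} (hd : 0 ≤ d) :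
    (2 : ℝ) ^ (3 - p) * d ^ p = 8 * (d / 2) ^ p := by
  have h8 : (2 : ℝ) ^ (3 : ℝ) = 8 := by norm_num
  rw [Real.rpow_sub two_pos, h8, Real.div_rpow hd zero_le_two]
  ring

theorem parameter_bounds_p_uniformly_convex_general
    {X : Type*} [MetricSpace X]
    (p k : ℝ) (hp : 1 ≤ p)
    (geo : ∀ x y : X, ∃ m : X, dist x m = dist x y / 2 ∧ dist m y = dist x y / 2)
    (puc : ∀ x y z m : X,
      dist x m = dist x y / 2 → dist m y = dist x y / 2 →
      dist z m ^ p ≤ (1 / 2) * dist z x ^ p + (1 / 2) * dist z y ^ p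
        - (k / 8) * dist x y ^ p)
    (hX : ∃ x y : X, x ≠ y) :
    k ≤ 2 ^ (3 - p) ∧ k ≤ 4 - 2 ^ (3 - p) ∧ k ≤ 2 := by
  obtain ⟨x, y, hxy⟩ := hX
  obtain ⟨m, hxm, hmy⟩ := geo x y
  have hp0 : p ≠ 0 := by positivity
  have hdp : 0 < dist x y ^ p := Real.rpow_pos_of_pos (dist_pos.2 hxy) p
  have hscale := Real.two_rpow_three_sub_mul_rpow p (dist_nonneg : 0 ≤ dist x y)
  have at_mid := puc x y m m hxm hmy
  rw [dist_self, Real.zero_rpow hp0, dist_comm m x, hxm, hmy] at at_mid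
  have at_end := puc x y x m hxm hmy
  rw [dist_self, Real.zero_rpow hp0, hxm] at at_end
  have bound_mid : k ≤ 2 ^ (3 - p) := le_of_mul_le_mul_right (by linarith) hdp
  have bound_end : k ≤ 4 - 2 ^ (3 - p) := le_of_mul_le_mul_right (by linarith) hdp
  exact ⟨bound_mid, bound_end, by linarith⟩

/-- In a `p`-uniformly convex space with parameter `k > 0` containing at least two
distinct points, `k ≤ 2^(3-p)` and `k ≤ 4 - 2^(3-p)`; in particular `k ≤ 2`. -/
theorem parameter_bounds_p_uniformly_convex
    {X : Type*} [MetricSpace X]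
    (p k : ℝ) (hp : 1 ≤ p) (hk : 0 < k)
    (geo : ∀ x y : X, ∃ m : X, dist x m = dist x y / 2 ∧ dist m y = dist x y / 2)
    (puc : ∀ x y z m : X,
      dist x m = dist x y / 2 → dist m y = dist x y / 2 →
      dist z m ^ p ≤ (1 / 2) * dist z x ^ p + (1 / 2) * dist z y ^ p
        - (k / 8) * dist x y ^ p)
    (hX : ∃ x y : X, x ≠ y) :
    k ≤ 2 ^ (3 - p) ∧ k ≤ 4 - 2 ^ (3 - p) ∧ k ≤ 2 :=
  parameter_bounds_p_uniformly_convex_general p k hp geo puc hX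
end
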